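/- arXiv:2509.22157 — 5 statements merged into one kernel-verified Lean document; each statement's English description precedes it below -/
import Mathlib

section
/- Let G = (V,E) be a finite hypergraph of rank r with minimum degree δ(G) ≥ 2rk², where k ≥ 2 is an integer. Then G admits a (1/k)-majority (k+1)-edge-colouring, i.e., a colouring c : E → {1,…,k+1} such that for every vertex v and every colour i, the number of hyperedges containing v with colour i is at most ⌊d(v)/k⌋. -/
open Finset

/-!
Iterative rounding in the style of Beck and Fiala. Start from the uniform fractional colouring
`x e i = 1/(k+1)`, whose column sums at a vertex `v` are `d(v)/(k+1)`. Call a pair `(v, i)` active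
while more than `d(v)/(k+1) + r` edges at `v` still give colour `i` positive weight; as long as some
entry of `x` is fractional, move `x` inside the affine space where rows sum to `1` and the column
sums of the active pairs are fixed, until a fractional entry hits `0` or `1`. Such a move exists
because there are fewer active pairs plus floating edges (rows with a fractional entry) than
fractional entries: the total slack `∑ ([x > 0] - x)` is at most `r` times
(#fractional entries - #floating edges), while every active pair accounts for more than `r` of it.
When `x` is integral no pair can be active, so every colour class at `v` has at most
`d(v)/(k+1) + r ≤ d(v)/k` edges once `d(v) ≥ r k (k+1)`.
-/

theorem exists_ne_zero_forall_sum_mul_eq_zero {α ι : Type*} [Fintype ι] (S : Finset α)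
    (L : ι → α → ℚ) (h : Fintype.card ι < #S) :
    ∃ Y : α → ℚ, (∀ a ∉ S, Y a = 0) ∧ (∃ a ∈ S, Y a ≠ 0) ∧ ∀ c, ∑ a ∈ S, L c a * Y a = 0 := by
  classical
  have hdep : ¬ LinearIndependent ℚ (fun (a : S) c => L c a) := fun hli => by
    have := hli.fintype_card_le_finrank
    rw [Module.finrank_fintype_fun_eq_card, Fintype.card_coe] at this
    omega
  obtain ⟨g, hg, a, ha⟩ := Fintype.not_linearIndependent_iff.1 hdep
  refine ⟨fun a => if h : a ∈ S then g ⟨a, h⟩ else 0, fun a ha => dif_neg ha,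
    ⟨a, a.2, by simpa using ha⟩, fun c => ?_⟩
  rw [← sum_coe_sort S]
  simpa [mul_comm] using congrFun hg c

theorem exists_add_mul_mem_Icc_notMem_Ioo {α : Type*} (S : Finset α) (x Y : α → ℚ)
    (hx : ∀ a ∈ S, x a ∈ Set.Ioo 0 1) (hY : ∃ a ∈ S, Y a ≠ 0) :
    ∃ t : ℚ, (∀ a ∈ S, x a + t * Y a ∈ Set.Icc 0 1) ∧ ∃ a ∈ S, x a + t * Y a ∉ Set.Ioo 0 1 := by
  classical
  -- `hit a` is the time at which `x a + t * Y a` reaches the boundary of `[0, 1]`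
  let hit a := if 0 < Y a then (1 - x a) / Y a else -x a / Y a
  obtain ⟨a₀, ha₀, hmin⟩ := exists_min_image {a ∈ S | Y a ≠ 0} hit (filter_nonempty_iff.2 hY)
  rw [mem_filter] at ha₀
  have ht : 0 < hit a₀ := by
    obtain ⟨h0, h1⟩ := hx a₀ ha₀.1
    simp only [hit]
    split_ifs with h
    · exact div_pos (by linarith) h
    · exact div_pos_of_neg_of_neg (by linarith) (lt_of_le_of_ne (not_lt.1 h) ha₀.2)
  set t := hit a₀
  refine ⟨t, fun a ha => ?_, a₀, ha₀.1, ?_⟩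
  · obtain ⟨h0, h1⟩ := hx a ha
    rcases lt_trichotomy (Y a) 0 with hneg | hzero | hpos
    · have hle := hmin a (mem_filter.2 ⟨ha, hneg.ne⟩)
      simp only [hit, if_neg (not_lt.2 hneg.le)] at hle
      have := (le_div_iff_of_neg hneg).1 hle
      constructor <;> nlinarith
    · simp [hzero, h0.le, h1.le]
    · have hle := hmin a (mem_filter.2 ⟨ha, hpos.ne'⟩)
      simp only [hit, if_pos hpos] at hle
      have := (le_div_iff₀ hpos).1 hle
      constructor <;> nlinarith
  · have hY₀ := ha₀.2
    simp only [t, hit]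
    split_ifs <;> field_simp <;> simp

namespace Hypergraph

variable {V κ : Type*}

def slack (x : Finset V → κ → ℚ) (e : Finset V) (i : κ) : ℚ :=
  (if 0 < x e i then 1 else 0) - x e i

theorem slack_pos {x : Finset V → κ → ℚ} {e : Finset V} {i : κ} (h : x e i ∈ Set.Ioo 0 1) :
    0 < slack x e i := by
  simp only [slack, if_pos h.1]
  linarith [h.2]

section

variable [DecidableEq V]

def posCount (E : Finset (Finset V)) (x : Finset V → κ → ℚ) (v : V) (i : κ) : ℕ :=
  #{e ∈ E | v ∈ e ∧ 0 < x e i}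

def colSum (E : Finset (Finset V)) (x : Finset V → κ → ℚ) (v : V) (i : κ) : ℚ :=
  ∑ e ∈ E with v ∈ e, x e i

theorem posCount_sub_colSum {E : Finset (Finset V)} {x : Finset V → κ → ℚ} (v : V) (i : κ) :
    (posCount E x v i : ℚ) - colSum E x v i = ∑ e ∈ E with v ∈ e, slack x e i := by
  simp only [slack, sum_sub_distrib, sum_boole, colSum, posCount, filter_filter]

theorem sum_sum_filter_mem {M : Type*} [AddCommMonoid M] [Fintype V] (E : Finset (Finset V))
    (g : Finset V → M) : ∑ v, ∑ e ∈ E with v ∈ e, g e = ∑ e ∈ E, #e • g e := by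
  rw [sum_comm' (t' := E) (s' := id) (by simp [and_comm])]
  simp

end

variable [Fintype κ]

def IsFractionalColouring (E : Finset (Finset V)) (x : Finset V → κ → ℚ) : Prop :=
  ∀ e ∈ E, (∀ i, 0 ≤ x e i) ∧ ∑ i, x e i = 1

def fractionalEntries (E : Finset (Finset V)) (x : Finset V → κ → ℚ) : Finset (Finset V × κ) :=
  {p ∈ E ×ˢ univ | x p.1 p.2 ∈ Set.Ioo 0 1}

def floatingEdges (E : Finset (Finset V)) (x : Finset V → κ → ℚ) : Finset (Finset V) :=
  {e ∈ E | ∃ i, x e i ∈ Set.Ioo 0 1}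

theorem isFractionalColouring_uniform [Nonempty κ] (E : Finset (Finset V)) :
    IsFractionalColouring E fun (_ : Finset V) (_ : κ) => (Fintype.card κ : ℚ)⁻¹ :=
  fun _ _ => ⟨fun _ => by positivity, by simp [Fintype.card_ne_zero]⟩

variable {E : Finset (Finset V)} {x : Finset V → κ → ℚ} {e : Finset V}

namespace IsFractionalColouring

theorem nonneg (hx : IsFractionalColouring E x) (he : e ∈ E) (i : κ) : 0 ≤ x e i :=
  (hx e he).1 i

theorem sum_eq_one (hx : IsFractionalColouring E x) (he : e ∈ E) : ∑ i, x e i = 1 :=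
  (hx e he).2

theorem add_le_one (hx : IsFractionalColouring E x) (he : e ∈ E) {i j : κ} (hij : i ≠ j) :
    x e i + x e j ≤ 1 :=
  hx.sum_eq_one he ▸ add_le_sum (fun l _ => hx.nonneg he l) (mem_univ i) (mem_univ j) hij

theorem le_one (hx : IsFractionalColouring E x) (he : e ∈ E) (i : κ) : x e i ≤ 1 :=
  hx.sum_eq_one he ▸ single_le_sum (fun j _ => hx.nonneg he j) (mem_univ i)

theorem exists_pos (hx : IsFractionalColouring E x) (he : e ∈ E) : ∃ i, 0 < x e i := by
  by_contra! h
  linarith [hx.sum_eq_one he, sum_nonpos fun i (_ : i ∈ univ) => h i]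

end IsFractionalColouring

theorem slack_nonneg (hx : IsFractionalColouring E x) (he : e ∈ E) (i : κ) : 0 ≤ slack x e i := by
  unfold slack
  split_ifs with h
  · linarith [hx.le_one he i]
  · linarith [hx.nonneg he i]

theorem slack_eq_zero (hx : IsFractionalColouring E x) (he : e ∈ E) {i : κ}
    (h : x e i ∉ Set.Ioo 0 1) : slack x e i = 0 := by
  have h1 := hx.le_one he i
  rcases (hx.nonneg he i).lt_or_eq with h0 | h0
  · simp [slack, le_antisymm h1 (not_lt.1 fun h1 => h ⟨h0, h1⟩)]
  · simp [slack, ← h0]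

theorem sum_slack (hx : IsFractionalColouring E x) (he : e ∈ E) :
    ∑ i, slack x e i = #{i | 0 < x e i} - 1 := by
  simp only [slack, sum_sub_distrib, sum_boole, hx.sum_eq_one he]

theorem filter_pos_eq_filter_mem_Ioo (hx : IsFractionalColouring E x) (he : e ∈ E) {i₀ : κ}
    (hi₀ : x e i₀ ∈ Set.Ioo 0 1) :
    ({i | 0 < x e i} : Finset κ) = ({i | x e i ∈ Set.Ioo 0 1} : Finset κ) := by
  ext i
  simp only [mem_filter, mem_univ, true_and, Set.mem_Ioo, iff_self_and]
  intro hi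
  refine (hx.le_one he i).lt_of_ne fun h1 => ?_
  have hne : i₀ ≠ i := by rintro rfl; exact hi₀.2.ne h1
  linarith [hx.add_le_one he hne, hi₀.1]

theorem card_filter_pos_eq_one (hx : IsFractionalColouring E x) (he : e ∈ E)
    (h : ∀ i, x e i ∉ Set.Ioo 0 1) : #({i | 0 < x e i} : Finset κ) = 1 := by
  have hint : ∀ i, x e i = if 0 < x e i then 1 else 0 := fun i => by
    have := slack_eq_zero hx he (h i)
    simp only [slack] at this
    linarith
  have := hx.sum_eq_one he
  rw [sum_congr rfl fun i _ => hint i, sum_boole] at this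
  exact_mod_cast this

theorem sum_slack_eq (hx : IsFractionalColouring E x) (he : e ∈ E) :
    ∑ i, slack x e i =
      #({i | x e i ∈ Set.Ioo 0 1} : Finset κ) - if ∃ i, x e i ∈ Set.Ioo 0 1 then 1 else 0 := by
  rw [sum_slack hx he]
  split_ifs with h
  · obtain ⟨i₀, hi₀⟩ := h
    rw [filter_pos_eq_filter_mem_Ioo hx he hi₀]
  · rw [card_filter_pos_eq_one hx he (not_exists.1 h),
      filter_false_of_mem fun i _ => not_exists.1 h i]
    simp

theorem mem_fractionalEntries {p : Finset V × κ} :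
    p ∈ fractionalEntries E x ↔ p.1 ∈ E ∧ x p.1 p.2 ∈ Set.Ioo 0 1 := by
  simp [fractionalEntries]

theorem card_fractionalEntries :
    #(fractionalEntries E x) = ∑ e ∈ E, #({i | x e i ∈ Set.Ioo 0 1} : Finset κ) := by
  simp only [fractionalEntries, card_filter, sum_product]

theorem sum_sum_slack (hx : IsFractionalColouring E x) :
    ∑ e ∈ E, ∑ i, slack x e i = #(fractionalEntries E x) - #(floatingEdges E x) := by
  rw [sum_congr rfl fun e he => sum_slack_eq hx he, sum_sub_distrib, card_fractionalEntries,
    floatingEdges, card_filter]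
  push_cast
  rfl

variable [DecidableEq V]

theorem colSum_uniform (v : V) (i : κ) :
    colSum E (fun _ _ => (Fintype.card κ : ℚ)⁻¹) v i = #{e ∈ E | v ∈ e} / Fintype.card κ := by
  simp [colSum, div_eq_mul_inv]

variable [Fintype V]

-- The pairs whose column sum is still held fixed; once a pair drops out, at most `s v i + r`
-- edges at `v` can ever receive colour `i`.
def activePairs (E : Finset (Finset V)) (x : Finset V → κ → ℚ) (s : V → κ → ℚ)
    (r : ℕ) : Finset (V × κ) :=
  {p | s p.1 p.2 + r < posCount E x p.1 p.2}

theorem sum_posCount_sub_colSum_le {r : ℕ} (hx : IsFractionalColouring E x)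
    (hE : ∀ e ∈ E, #e ≤ r) :
    ∑ p : V × κ, ((posCount E x p.1 p.2 : ℚ) - colSum E x p.1 p.2)
      ≤ r * ∑ e ∈ E, ∑ i, slack x e i := by
  calc _ = ∑ i, ∑ v, ∑ e ∈ E with v ∈ e, slack x e i := by
        rw [Fintype.sum_prod_type, sum_comm]
        simp only [posCount_sub_colSum]
    _ = ∑ e ∈ E, #e * ∑ i, slack x e i := by
        simp only [sum_sum_filter_mem, nsmul_eq_mul, mul_sum]
        exact sum_comm
    _ ≤ ∑ e ∈ E, r * ∑ i, slack x e i :=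
        sum_le_sum fun e he => mul_le_mul_of_nonneg_right (by exact_mod_cast hE e he)
          (sum_nonneg fun i _ => slack_nonneg hx he i)
    _ = _ := (mul_sum ..).symm

theorem card_activePairs_add_card_floatingEdges_lt {s : V → κ → ℚ} {r : ℕ}
    (hx : IsFractionalColouring E x) (hE : ∀ e ∈ E, #e ≤ r)
    (hinv : ∀ p ∈ activePairs E x s r, colSum E x p.1 p.2 = s p.1 p.2)
    (hne : (fractionalEntries E x).Nonempty) :
    #(activePairs E x s r) + #(floatingEdges E x) < #(fractionalEntries E x) := by
  have hD_eq := sum_sum_slack hx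
  have hgap_le := sum_posCount_sub_colSum_le (r := r) hx hE
  set D := ∑ e ∈ E, ∑ i, slack x e i
  have hgap (p : V × κ) : 0 ≤ (posCount E x p.1 p.2 : ℚ) - colSum E x p.1 p.2 := by
    rw [posCount_sub_colSum]
    exact sum_nonneg fun e he => slack_nonneg hx (mem_filter.1 he).1 _
  have hD : 0 < D := by
    obtain ⟨⟨e, i⟩, hei⟩ := hne
    obtain ⟨he, hi⟩ := mem_fractionalEntries.1 hei
    calc 0 < slack x e i := slack_pos hi
      _ ≤ ∑ j, slack x e j := single_le_sum (fun j _ => slack_nonneg hx he j) (mem_univ i)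
      _ ≤ D := single_le_sum (fun e he => sum_nonneg fun j _ => slack_nonneg hx he j) he
  have hA : (#(activePairs E x s r) : ℚ) < D := by
    rcases (activePairs E x s r).eq_empty_or_nonempty with hA | hA
    · simpa [hA] using hD
    refine lt_of_mul_lt_mul_left ?_ (Nat.cast_nonneg r)
    calc (r : ℚ) * #(activePairs E x s r) = ∑ p ∈ activePairs E x s r, (r : ℚ) := by
          simp [mul_comm]
      _ < ∑ p ∈ activePairs E x s r, ((posCount E x p.1 p.2 : ℚ) - colSum E x p.1 p.2) :=
          sum_lt_sum_of_nonempty hA fun p hp => by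
            have := (mem_filter.1 hp).2
            rw [hinv p hp]
            linarith
      _ ≤ ∑ p : V × κ, ((posCount E x p.1 p.2 : ℚ) - colSum E x p.1 p.2) :=
          sum_le_sum_of_subset_of_nonneg (subset_univ _) fun p _ _ => hgap p
      _ ≤ r * D := hgap_le
  have : (#(activePairs E x s r) : ℚ) + #(floatingEdges E x) < #(fractionalEntries E x) := by
    linarith
  exact_mod_cast this

theorem exists_direction {s : V → κ → ℚ} {r : ℕ}
    (hx : IsFractionalColouring E x) (hE : ∀ e ∈ E, #e ≤ r)
    (hinv : ∀ p ∈ activePairs E x s r, colSum E x p.1 p.2 = s p.1 p.2)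
    (hne : (fractionalEntries E x).Nonempty) :
    ∃ Y : Finset V × κ → ℚ, (∀ a ∉ fractionalEntries E x, Y a = 0) ∧
      (∃ a ∈ fractionalEntries E x, Y a ≠ 0) ∧ (∀ e ∈ E, ∑ i, Y (e, i) = 0) ∧
      ∀ p ∈ activePairs E x s r, ∑ e ∈ E with p.1 ∈ e, Y (e, p.2) = 0 := by
  classical
  obtain ⟨Y, hYS, hY, hL⟩ := exists_ne_zero_forall_sum_mul_eq_zero (fractionalEntries E x)
    (Sum.elim (fun (e : floatingEdges E x) a => if a.1 = e.1 then 1 else 0)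
      (fun (p : activePairs E x s r) a => if a.2 = p.1.2 ∧ p.1.1 ∈ a.1 then 1 else 0))
    (by simpa [add_comm] using card_activePairs_add_card_floatingEdges_lt hx hE hinv hne)
  have hsum (P : Finset V × κ → Prop) [DecidablePred P] :
      ∑ a ∈ fractionalEntries E x, (if P a then 1 else 0) * Y a
        = ∑ e ∈ E, ∑ i, if P (e, i) then Y (e, i) else 0 := by
    rw [← sum_product (f := fun a => if P a then Y a else 0)]
    simp only [ite_mul, one_mul, zero_mul]
    exact sum_subset (filter_subset _ _) fun a _ ha => by simp [hYS a ha]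
  refine ⟨Y, hYS, hY, fun e he => ?_, fun p hp => ?_⟩
  · by_cases hf : e ∈ floatingEdges E x
    · have := hL (Sum.inl ⟨e, hf⟩)
      rw [Sum.elim_inl, hsum (fun a => a.1 = e), sum_comm] at this
      simpa [he] using this
    · refine sum_eq_zero fun i _ => hYS _ fun hi => hf ?_
      exact mem_filter.2 ⟨he, i, (mem_fractionalEntries.1 hi).2⟩
  · have := hL (Sum.inr ⟨p, hp⟩)
    rw [Sum.elim_inr, hsum (fun a => a.2 = p.2 ∧ p.1 ∈ a.1)] at this
    simpa [sum_filter, ite_and] using this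

theorem exists_step {s : V → κ → ℚ} {r : ℕ}
    (hx : IsFractionalColouring E x) (hE : ∀ e ∈ E, #e ≤ r)
    (hinv : ∀ p ∈ activePairs E x s r, colSum E x p.1 p.2 = s p.1 p.2)
    (hne : (fractionalEntries E x).Nonempty) :
    ∃ x' : Finset V → κ → ℚ, IsFractionalColouring E x' ∧
      (∀ p ∈ activePairs E x' s r, colSum E x' p.1 p.2 = s p.1 p.2) ∧
      fractionalEntries E x' ⊂ fractionalEntries E x := by
  obtain ⟨Y, hYS, hY, hrow, hcol⟩ := exists_direction hx hE hinv hne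
  obtain ⟨t, hIcc, a₀, ha₀, hbdry⟩ := exists_add_mul_mem_Icc_notMem_Ioo (fractionalEntries E x)
    (fun a => x a.1 a.2) Y (fun a ha => (mem_fractionalEntries.1 ha).2) hY
  set x' : Finset V → κ → ℚ := fun e i => x e i + t * Y (e, i)
  have hfix (e : Finset V) (i : κ) (h : (e, i) ∉ fractionalEntries E x) : x' e i = x e i := by
    simp [x', hYS _ h]
  have hx' : IsFractionalColouring E x' := fun e he => by
    refine ⟨fun i => ?_, ?_⟩
    · by_cases h : (e, i) ∈ fractionalEntries E x
      · exact (hIcc _ h).1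
      · exact hfix e i h ▸ hx.nonneg he i
    · simp only [x', sum_add_distrib, ← mul_sum, hrow e he, mul_zero, add_zero, hx.sum_eq_one he]
  have hpos (e : Finset V) (i : κ) (h : 0 < x' e i) : 0 < x e i := by
    by_cases hei : (e, i) ∈ fractionalEntries E x
    · exact (mem_fractionalEntries.1 hei).2.1
    · exact hfix e i hei ▸ h
  have hactive : activePairs E x' s r ⊆ activePairs E x s r := fun p hp => by
    refine mem_filter.2 ⟨mem_univ _, (mem_filter.1 hp).2.trans_le ?_⟩
    refine Nat.cast_le.2 (card_le_card fun e he => ?_)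
    rw [mem_filter] at he ⊢
    exact ⟨he.1, he.2.1, hpos e p.2 he.2.2⟩
  refine ⟨x', hx', fun p hp => ?_, ?_⟩
  · simp only [colSum, x', sum_add_distrib, ← mul_sum, hcol p (hactive hp), mul_zero, add_zero]
    exact hinv p (hactive hp)
  · refine ssubset_of_subset_of_ne (fun a ha => ?_) fun h => ?_
    · by_contra h
      have ha' := mem_fractionalEntries.1 ha
      rw [hfix a.1 a.2 h] at ha'
      exact h (mem_fractionalEntries.2 ha')
    · exact hbdry (mem_fractionalEntries.1 (h ▸ ha₀)).2

theorem exists_colouring_of_fractionalEntries_eq_empty [Nonempty κ] [DecidableEq κ]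
    {s : V → κ → ℚ} {r : ℕ} (hx : IsFractionalColouring E x)
    (hinv : ∀ p ∈ activePairs E x s r, colSum E x p.1 p.2 = s p.1 p.2)
    (h : fractionalEntries E x = ∅) :
    ∃ c : Finset V → κ, ∀ v i, (#{e ∈ E | v ∈ e ∧ c e = i} : ℚ) ≤ s v i + r := by
  refine ⟨fun e => Classical.epsilon fun i => 0 < x e i, fun v i => ?_⟩
  have hcount : #{e ∈ E | v ∈ e ∧ Classical.epsilon (fun i => 0 < x e i) = i}
      ≤ posCount E x v i := by
    refine card_le_card fun e he => ?_
    rw [mem_filter] at he ⊢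
    exact ⟨he.1, he.2.1, he.2.2 ▸ Classical.epsilon_spec (hx.exists_pos he.1)⟩
  have hcol : (posCount E x v i : ℚ) = colSum E x v i := by
    rw [← sub_eq_zero, posCount_sub_colSum]
    refine sum_eq_zero fun e he => slack_eq_zero hx (mem_filter.1 he).1 fun hi => ?_
    simpa [h] using (mem_fractionalEntries (p := (e, i))).2 ⟨(mem_filter.1 he).1, hi⟩
  have hinactive : (posCount E x v i : ℚ) ≤ s v i + r := by
    by_contra! hlt
    have := hinv (v, i) (mem_filter.2 ⟨mem_univ _, hlt⟩)
    linarith [(Nat.cast_nonneg r : (0 : ℚ) ≤ r)]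
  exact le_trans (by exact_mod_cast hcount) hinactive

theorem exists_colouring_of_forall_activePairs [Nonempty κ] [DecidableEq κ]
    {s : V → κ → ℚ} {r : ℕ} (hE : ∀ e ∈ E, #e ≤ r) (hx : IsFractionalColouring E x)
    (hinv : ∀ p ∈ activePairs E x s r, colSum E x p.1 p.2 = s p.1 p.2) :
    ∃ c : Finset V → κ, ∀ v i, (#{e ∈ E | v ∈ e ∧ c e = i} : ℚ) ≤ s v i + r := by
  induction hn : #(fractionalEntries E x) using Nat.strong_induction_on generalizing x with
  | _ n ih =>
  rcases (fractionalEntries E x).eq_empty_or_nonempty with h | hne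
  · exact exists_colouring_of_fractionalEntries_eq_empty hx hinv h
  · obtain ⟨x', hx', hinv', hlt⟩ := exists_step hx hE hinv hne
    exact ih _ (hn ▸ card_lt_card hlt) hx' hinv' rfl

theorem exists_colouring_card_le_colSum_add [Nonempty κ] [DecidableEq κ] {r : ℕ}
    (hE : ∀ e ∈ E, #e ≤ r) (hx : IsFractionalColouring E x) :
    ∃ c : Finset V → κ, ∀ v i, (#{e ∈ E | v ∈ e ∧ c e = i} : ℚ) ≤ colSum E x v i + r :=
  exists_colouring_of_forall_activePairs hE hx fun _ _ => rfl

end Hypergraph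

theorem Nat.le_div_of_cast_le_div_succ_add {n d r k : ℕ} (hk : 0 < k) (hd : r * (k * (k + 1)) ≤ d)
    (hn : (n : ℚ) ≤ d / (k + 1) + r) : n ≤ d / k := by
  rw [Nat.le_div_iff_mul_le hk]
  have hk' : (0 : ℚ) < k := by exact_mod_cast hk
  have hd' : (r : ℚ) * (k * (k + 1)) ≤ d := by exact_mod_cast hd
  have hn' : (n : ℚ) * (k + 1) ≤ d + r * (k + 1) := by
    have := mul_le_mul_of_nonneg_right hn (by positivity : (0 : ℚ) ≤ k + 1)
    rwa [add_mul, div_mul_cancel₀ _ (by positivity)] at this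
  suffices (n : ℚ) * k ≤ d by exact_mod_cast this
  nlinarith

/-- Main theorem: every hypergraph of rank `r` with minimum degree at least `2 r k²`
admits a `(1/k)`-majority `(k+1)`-edge-colouring. -/
theorem majority_colouring_hypergraph (V : Type) [Fintype V] [DecidableEq V]
    (E : Finset (Finset V)) (r k : ℕ) (hk : 2 ≤ k)
    (hE : ∀ e ∈ E, e.Nonempty ∧ e.card ≤ r)
    (hδ : ∀ v : V, 2 * r * k ^ 2 ≤ (E.filter (fun e => v ∈ e)).card) :
    ∃ c : Finset V → Fin (k + 1),
      ∀ (v : V) (i : Fin (k + 1)),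
        (E.filter (fun e => v ∈ e ∧ c e = i)).card
          ≤ (E.filter (fun e => v ∈ e)).card / k := by
  obtain ⟨c, hc⟩ := Hypergraph.exists_colouring_card_le_colSum_add (fun e he => (hE e he).2)
    (Hypergraph.isFractionalColouring_uniform (κ := Fin (k + 1)) E)
  refine ⟨c, fun v i => Nat.le_div_of_cast_le_div_succ_add (r := r) (by omega) ?_ ?_⟩
  · calc r * (k * (k + 1)) ≤ r * (2 * k ^ 2) := Nat.mul_le_mul_left r (by nlinarith)
      _ = 2 * r * k ^ 2 := by ring
      _ ≤ _ := hδ v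
  · have := hc v i
    rwa [Hypergraph.colSum_uniform, Fintype.card_fin, Nat.cast_succ] at this
end

section
/- Let k ≥ 2 and r ≥ 2 be integers, and let δ be a positive integer satisfying 4(k+1)·exp(−δ/(3k²(k+1))) ≤ 1 and 8(k+1)(r−1)·exp(−δ/(3k²(k+1)))·δ ≤ 1. Then every hypergraph of rank r with minimum degree at least δ admits a (1/k)-majority (k+1)-edge-colouring. -/
/-!
Colour the edges independently and uniformly with `k + 1` colours. For a vertex `v` of degree
`d(v)` and a colour `i`, an exponential-moment (Chernoff) bound with base `(k + 1) / k` shows that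
more than `⌊d(v)/k⌋` edges at `v` receive colour `i` with probability at most `exp (-θ d(v))`,
`θ = 1 / (3k²(k + 1))`. This bad event is determined by the colours of the edges at `v`, hence is
independent of all bad events at vertices sharing no edge with `v`; the others number at most
`(k + 1)((r - 1) d(v) + 1)`. The weighted local lemma applies with weights
`x_v = exp ((c - θ) d(v))`, `c = 8(k + 1)(r - 1) exp (-θδ)`: the two hypotheses on `δ` give
`x_v ≤ 1/2` and `2 ∑ x ≤ c d(v)` over the neighbours of any event, so that
`x_v ∏ (1 - x) ≥ exp ((c - θ) d(v)) exp (-c d(v)) = exp (-θ d(v))`.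

The local lemma is proved by counting on the finite product space `ι → κ`, where events depending
on disjoint sets of coordinates are exactly independent.
-/

open Finset Real Function

section Independence

variable {ι κ : Type*} [Fintype ι] [DecidableEq ι] [Fintype κ] [DecidableEq κ]

theorem card_inter_mul_card_eq_card_mul_card {A B : Finset (ι → κ)} {s : Finset ι}
    (hA : DependsOn (· ∈ A) (s : Set ι)) (hB : DependsOn (· ∈ B) (s : Set ι)ᶜ) :
    #(A ∩ B) * Fintype.card (ι → κ) = #A * #B := by
  -- exchanging the `s`-coordinates is an involution carrying `(A ∩ B) ×ˢ univ` onto `A ×ˢ B`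
  let swap : (ι → κ) × (ι → κ) → (ι → κ) × (ι → κ) :=
    fun p => (s.piecewise p.1 p.2, s.piecewise p.2 p.1)
  have swap_swap (p) : swap (swap p) = p := by
    ext t <;> by_cases ht : t ∈ s <;> simp [swap, ht]
  have fst_eq_on {p} : ∀ t ∈ (s : Set ι), (swap p).1 t = p.1 t := by
    intro t ht; simp [swap, mem_coe.mp ht]
  have fst_eq_off {p} : ∀ t ∈ (s : Set ι)ᶜ, (swap p).1 t = p.2 t := by
    intro t ht; simp [swap, show t ∉ s from ht]
  have snd_eq_off {p} : ∀ t ∈ (s : Set ι)ᶜ, (swap p).2 t = p.1 t := by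
    intro t ht; simp [swap, show t ∉ s from ht]
  rw [← card_univ, ← card_product, ← card_product]
  refine card_nbij' swap swap (fun p hp => ?_) (fun p hp => ?_) (fun p _ => swap_swap p)
    (fun p _ => swap_swap p)
  · simp only [coe_product, Set.mem_prod, mem_coe, mem_inter] at hp ⊢
    exact ⟨(hA fst_eq_on).mpr hp.1.1, (hB snd_eq_off).mpr hp.1.2⟩
  · simp only [coe_product, Set.mem_prod, mem_coe, mem_inter] at hp ⊢
    exact ⟨⟨(hA fst_eq_on).mpr hp.1, (hB fst_eq_off).mpr hp.2⟩, mem_univ _⟩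

end Independence

section Avoiding

variable {Ω J : Type*} [Fintype Ω] [DecidableEq Ω]

def avoiding (A : J → Finset Ω) (S : Finset J) : Finset Ω := univ \ S.biUnion A

theorem avoiding_empty (A : J → Finset Ω) : avoiding A ∅ = univ := by
  simp [avoiding]

theorem avoiding_anti (A : J → Finset Ω) {S T : Finset J} (h : S ⊆ T) :
    avoiding A T ⊆ avoiding A S :=
  sdiff_subset_sdiff subset_rfl (biUnion_subset_biUnion_of_subset_left A h)

variable [DecidableEq J]

theorem avoiding_insert (A : J → Finset Ω) (l : J) (S : Finset J) :
    avoiding A (insert l S) = avoiding A S \ A l := by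
  rw [avoiding, avoiding, biUnion_insert, sdiff_sdiff_left, union_comm]; rfl

theorem card_avoiding_insert (A : J → Finset Ω) (l : J) (S : Finset J) :
    (#(avoiding A (insert l S)) : ℝ) = #(avoiding A S) - #(A l ∩ avoiding A S) := by
  rw [avoiding_insert, eq_sub_iff_add_eq, inter_comm]
  exact_mod_cast card_sdiff_add_card_inter _ _

theorem prod_one_sub_mul_card_avoiding_le {A : J → Finset Ω} {x : J → ℝ} (hx : ∀ j, x j ≤ 1)
    (U T : Finset J)
    (h : ∀ l ∈ T, ∀ W ⊆ T, l ∉ W →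
      (#(A l ∩ avoiding A (U ∪ W)) : ℝ) ≤ x l * #(avoiding A (U ∪ W))) :
    (∏ l ∈ T, (1 - x l)) * #(avoiding A U) ≤ #(avoiding A (U ∪ T)) := by
  induction T using Finset.induction_on with
  | empty => simp
  | insert l T hlT ih =>
    have ih := ih fun m hm W hW => h m (mem_insert_of_mem hm) W (hW.trans (subset_insert l T))
    have hl := h l (mem_insert_self l T) T (subset_insert l T) hlT
    calc (∏ m ∈ insert l T, (1 - x m)) * #(avoiding A U)
        = (1 - x l) * ((∏ m ∈ T, (1 - x m)) * #(avoiding A U)) := by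
          rw [prod_insert hlT]; ring
      _ ≤ (1 - x l) * #(avoiding A (U ∪ T)) := by gcongr; linarith [hx l]
      _ ≤ #(avoiding A (U ∪ insert l T)) := by
        rw [union_insert, card_avoiding_insert]; linarith

end Avoiding

section LocalLemma

variable {ι κ J : Type*} [Fintype ι] [DecidableEq ι] [Fintype κ] [DecidableEq κ]
  [Fintype J] [DecidableEq J]

def dependencyNbhd (I : J → Finset ι) (j : J) : Finset J :=
  {l | l ≠ j ∧ ¬Disjoint (I l) (I j)}

variable {A : J → Finset (ι → κ)} {I : J → Finset ι} {x : J → ℝ}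

omit [Fintype J] [DecidableEq J] in
theorem dependsOn_mem_avoiding {S : Finset J} {s : Set ι}
    (h : ∀ l ∈ S, DependsOn (· ∈ A l) s) : DependsOn (· ∈ avoiding A S) s := by
  intro ω ω' hωω'
  simp only [avoiding, mem_sdiff, mem_univ, mem_biUnion, true_and, not_exists, not_and]
  exact propext (forall₂_congr fun l hl => not_congr (h l hl hωω').to_iff)

omit [Fintype J] [DecidableEq J] in
theorem card_inter_avoiding_mul_card_eq (hA : ∀ j, DependsOn (· ∈ A j) (I j : Set ι))
    {S : Finset J} {j : J} (hS : ∀ l ∈ S, Disjoint (I l) (I j)) :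
    #(A j ∩ avoiding A S) * Fintype.card (ι → κ) = #(A j) * #(avoiding A S) :=
  card_inter_mul_card_eq_card_mul_card (hA j) <| dependsOn_mem_avoiding fun l hl =>
    (hA l).mono (Set.subset_compl_iff_disjoint_right.mpr (disjoint_coe.mpr (hS l hl)))

omit [Fintype ι] in
theorem prod_one_sub_dependencyNbhd_le (hx0 : ∀ j, 0 ≤ x j) (hx1 : ∀ j, x j ≤ 1) {S : Finset J}
    {j : J} (hj : j ∉ S) :
    ∏ l ∈ dependencyNbhd I j, (1 - x l) ≤ ∏ l ∈ {l ∈ S | ¬Disjoint (I l) (I j)}, (1 - x l) := by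
  refine prod_le_prod_of_subset_of_le_one (fun l hl => ?_) (fun l _ => by linarith [hx1 l])
    (fun l _ _ => by linarith [hx0 l])
  simp only [dependencyNbhd, mem_filter, mem_univ, true_and]
  exact ⟨fun h => hj (h ▸ (mem_filter.mp hl).1), (mem_filter.mp hl).2⟩

theorem card_inter_avoiding_le [Nonempty κ] (hA : ∀ j, DependsOn (· ∈ A j) (I j : Set ι))
    (hx0 : ∀ j, 0 ≤ x j) (hx1 : ∀ j, x j ≤ 1)
    (hP : ∀ j, (#(A j) : ℝ) ≤ x j * (∏ l ∈ dependencyNbhd I j, (1 - x l)) * Fintype.card (ι → κ))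
    (S : Finset J) (j : J) (hj : j ∉ S) :
    (#(A j ∩ avoiding A S) : ℝ) ≤ x j * #(avoiding A S) := by
  induction S using Finset.strongInduction generalizing j with
  | H S ih =>
  -- `A j` is independent of avoiding the events `far`, and by the induction hypothesis avoiding
  -- the events `near` as well loses at most the factor `∏ l ∈ near, (1 - x l)`
  set far := {l ∈ S | Disjoint (I l) (I j)}
  set near := {l ∈ S | ¬Disjoint (I l) (I j)}
  have hpeel : (∏ l ∈ near, (1 - x l)) * #(avoiding A far) ≤ #(avoiding A S) := by
    rw [← filter_union_filter_not_eq (fun l => Disjoint (I l) (I j)) S]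
    refine prod_one_sub_mul_card_avoiding_le hx1 far near fun l hl W hW hlW => ?_
    have hl_far : l ∉ far ∪ W := by
      simp only [far, mem_union, mem_filter, not_or, not_and]
      exact ⟨fun _ => (mem_filter.mp hl).2, hlW⟩
    refine ih _ ((ssubset_iff_of_subset ?_).mpr ⟨l, filter_subset _ S hl, hl_far⟩) l hl_far
    exact union_subset (filter_subset _ S) (hW.trans (filter_subset _ S))
  have hN : (0 : ℝ) < Fintype.card (ι → κ) := by exact_mod_cast Fintype.card_pos
  refine le_of_mul_le_mul_right ?_ hN
  have hxj := hx0 j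
  calc (#(A j ∩ avoiding A S) : ℝ) * Fintype.card (ι → κ)
      ≤ #(A j ∩ avoiding A far) * Fintype.card (ι → κ) := by
        gcongr
        exact avoiding_anti A (filter_subset _ S)
    _ = (#(A j) : ℝ) * #(avoiding A far) := by
        exact_mod_cast card_inter_avoiding_mul_card_eq hA fun l hl => (mem_filter.mp hl).2
    _ ≤ x j * (∏ l ∈ dependencyNbhd I j, (1 - x l)) * Fintype.card (ι → κ)
          * #(avoiding A far) := by
        gcongr; exact hP j
    _ = x j * Fintype.card (ι → κ)
          * ((∏ l ∈ dependencyNbhd I j, (1 - x l)) * #(avoiding A far)) := by ring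
    _ ≤ x j * Fintype.card (ι → κ) * #(avoiding A S) := by
        gcongr
        exact (mul_le_mul_of_nonneg_right (prod_one_sub_dependencyNbhd_le hx0 hx1 hj)
          (Nat.cast_nonneg _)).trans hpeel
    _ = x j * #(avoiding A S) * Fintype.card (ι → κ) := by ring

theorem exists_forall_notMem_of_lll [Nonempty κ] (hA : ∀ j, DependsOn (· ∈ A j) (I j : Set ι))
    (hx0 : ∀ j, 0 ≤ x j) (hx1 : ∀ j, x j < 1)
    (hP : ∀ j, (#(A j) : ℝ) ≤ x j * (∏ l ∈ dependencyNbhd I j, (1 - x l)) * Fintype.card (ι → κ)) :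
    ∃ ω : ι → κ, ∀ j, ω ∉ A j := by
  have hpos : 0 < (∏ l, (1 - x l)) * #(avoiding A ∅) := by
    rw [avoiding_empty, card_univ]
    exact mul_pos (prod_pos fun l _ => by linarith [hx1 l]) (by exact_mod_cast Fintype.card_pos)
  have hle := prod_one_sub_mul_card_avoiding_le (fun j => (hx1 j).le) ∅ univ fun l _ W _ hlW => by
    rw [empty_union]
    exact card_inter_avoiding_le hA hx0 (fun j => (hx1 j).le) hP W l hlW
  rw [empty_union] at hle
  obtain ⟨ω, hω⟩ := card_pos.mp (by exact_mod_cast hpos.trans_le hle)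
  exact ⟨ω, fun j hj => (mem_sdiff.mp hω).2 (mem_biUnion.mpr ⟨j, mem_univ j, hj⟩)⟩

end LocalLemma

noncomputable def chernoffExponent (k : ℕ) : ℝ := 1 / (3 * k ^ 2 * (k + 1))

theorem one_add_inv_mul_exp_chernoffExponent_pow_le {k : ℕ} (hk : 2 ≤ k) :
    ((1 + 1 / (k * (k + 1))) * exp (chernoffExponent k)) ^ k ≤ (k + 1) / k := by
  have hk2 : (2 : ℝ) ≤ k := by exact_mod_cast hk
  set y : ℝ := 1 / (k + 1) + 1 / (3 * k * (k + 1)) with hy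
  have hy' : y = (3 * k + 1) / (3 * k * (k + 1)) := by rw [hy]; field_simp
  have hy0 : 0 ≤ y := by positivity
  have hy1 : y ≤ 1 := by rw [hy', div_le_one (by positivity)]; nlinarith
  have hbase : (1 + 1 / (k * (k + 1))) ^ k ≤ exp (1 / (k + 1)) := by
    calc (1 + 1 / ((k : ℝ) * (k + 1))) ^ k ≤ exp (1 / (k * (k + 1))) ^ k := by
          gcongr; linarith [add_one_le_exp (1 / ((k : ℝ) * (k + 1)))]
      _ = exp (1 / (k + 1)) := by rw [← exp_nat_mul]; congr 1; field_simp
  have htaylor : exp y ≤ 1 + y + y ^ 2 / 2 + 2 / 9 * y ^ 3 :=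
    calc exp y ≤ ∑ m ∈ range 3, y ^ m / m.factorial + y ^ 3 * (3 + 1) / (Nat.factorial 3 * 3) :=
          exp_bound' hy0 hy1 (by norm_num)
      _ = 1 + y + y ^ 2 / 2 + 2 / 9 * y ^ 3 := by
          norm_num [sum_range_succ, Nat.factorial]; ring
  have hpoly : y + y ^ 2 / 2 + 2 / 9 * y ^ 3 ≤ 1 / k := by
    have hexpand : y + y ^ 2 / 2 + 2 / 9 * y ^ 3
        = (18 * (3 * k + 1) * (3 * k * (k + 1)) ^ 2 + 9 * (3 * k + 1) ^ 2 * (3 * k * (k + 1))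
            + 4 * (3 * k + 1) ^ 3) / (18 * (3 * k * (k + 1)) ^ 3) := by
      rw [hy']; field_simp; ring
    rw [hexpand, div_le_div_iff₀ (by positivity) (by positivity)]
    nlinarith [sq_nonneg ((k : ℝ) - 2), hk2]
  calc ((1 + 1 / (k * (k + 1))) * exp (chernoffExponent k)) ^ k
      = (1 + 1 / (k * (k + 1))) ^ k * exp (1 / (3 * k * (k + 1))) := by
        rw [mul_pow, ← exp_nat_mul, chernoffExponent]; congr 2; field_simp
    _ ≤ exp (1 / (k + 1)) * exp (1 / (3 * k * (k + 1))) := by gcongr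
    _ = exp y := by rw [← exp_add]
    _ ≤ (k + 1) / k := by rw [add_div, div_self (by positivity)]; linarith

theorem one_add_inv_pow_mul_exp_mul_chernoffExponent_le {k : ℕ} (hk : 2 ≤ k) (d : ℕ) :
    (1 + 1 / (k * (k + 1))) ^ d * exp (d * chernoffExponent k)
      ≤ ((k + 1) / k) ^ (d / k + 1) := by
  set B : ℝ := (1 + 1 / (k * (k + 1))) * exp (chernoffExponent k)
  have hB : 1 ≤ B := one_le_mul_of_one_le_of_one_le (le_add_of_nonneg_right (by positivity))
    (one_le_exp (by unfold chernoffExponent; positivity))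
  calc (1 + 1 / (k * (k + 1))) ^ d * exp (d * chernoffExponent k) = B ^ d := by
        rw [mul_pow, ← exp_nat_mul]
    _ ≤ B ^ (k * (d / k + 1)) := pow_le_pow_right₀ hB (Nat.lt_mul_div_succ d (by omega)).le
    _ = (B ^ k) ^ (d / k + 1) := pow_mul B k _
    _ ≤ ((k + 1) / k) ^ (d / k + 1) := by
        gcongr; exact one_add_inv_mul_exp_chernoffExponent_pow_le hk

section Chernoff

variable {ι κ : Type*} [Fintype ι] [DecidableEq ι] [Fintype κ] [DecidableEq κ]

theorem sum_pow_card_filter_eq (t : ℝ) (D : Finset ι) (i : κ) :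
    ∑ ω : ι → κ, t ^ #{e ∈ D | ω e = i}
      = (t + (Fintype.card κ - 1)) ^ #D * Fintype.card κ ^ (Fintype.card ι - #D) := by
  have hsum (e : ι) : ∑ a : κ, (if e ∈ D ∧ a = i then t else 1)
      = if e ∈ D then t + (Fintype.card κ - 1) else Fintype.card κ := by
    have hcard : 1 ≤ Fintype.card κ := Fintype.card_pos_iff.mpr ⟨i⟩
    by_cases he : e ∈ D <;> simp [he, Finset.sum_ite, filter_eq', filter_ne', card_erase_of_mem,
      Nat.cast_sub hcard]
  have hprod (ω : ι → κ) :
      t ^ #{e ∈ D | ω e = i} = ∏ e, (if e ∈ D ∧ ω e = i then t else 1) := by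
    rw [← prod_filter, prod_const]
    congr 2
    ext e
    simp
  calc ∑ ω : ι → κ, t ^ #{e ∈ D | ω e = i}
      = ∏ e, ∑ a : κ, (if e ∈ D ∧ a = i then t else 1) := by
        rw [Fintype.prod_sum]; simp_rw [hprod]
    _ = _ := by
        simp_rw [hsum]
        rw [prod_ite, prod_const, prod_const, filter_mem_eq_inter, univ_inter, filter_not,
          filter_mem_eq_inter, univ_inter, card_univ_sdiff]

omit [DecidableEq ι] in
theorem card_filter_lt_mul_pow_le_sum {t : ℝ} (ht : 1 ≤ t) (f : ι → ℕ) (m : ℕ) :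
    #{ω | m < f ω} * t ^ (m + 1) ≤ ∑ ω, t ^ f ω := by
  calc #{ω | m < f ω} * t ^ (m + 1) ≤ ∑ ω ∈ {ω | m < f ω}, t ^ f ω := by
        rw [← nsmul_eq_mul]
        exact card_nsmul_le_sum _ _ _ fun ω hω => pow_le_pow_right₀ ht (mem_filter.mp hω).2
    _ ≤ ∑ ω, t ^ f ω :=
        sum_le_sum_of_subset_of_nonneg (subset_univ _) fun _ _ _ => by positivity

end Chernoff

theorem card_filter_div_lt_card_filter_le {ι : Type*} [Fintype ι] [DecidableEq ι] {k : ℕ}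
    (hk : 2 ≤ k) (D : Finset ι) (i : Fin (k + 1)) :
    (#{ω : ι → Fin (k + 1) | #D / k < #{e ∈ D | ω e = i}} : ℝ)
      ≤ exp (-(#D * chernoffExponent k)) * (k + 1) ^ Fintype.card ι := by
  have hk0 : (0 : ℝ) < k := by exact_mod_cast (by omega : 0 < k)
  set t : ℝ := (k + 1) / k with ht_def
  have ht : 1 ≤ t := by rw [le_div_iff₀ hk0]; linarith
  have hmoment : ∑ ω : ι → Fin (k + 1), t ^ #{e ∈ D | ω e = i}
      = (1 + 1 / (k * (k + 1))) ^ #D * (k + 1) ^ Fintype.card ι := by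
    rw [sum_pow_card_filter_eq, Fintype.card_fin, ← Nat.sub_add_cancel (card_le_univ D), pow_add,
      Nat.add_sub_cancel]
    push_cast
    rw [show t + (k + 1 - 1) = (k + 1) * (1 + 1 / (k * (k + 1))) by rw [ht_def]; field_simp; ring,
      mul_pow]
    ring
  refine le_of_mul_le_mul_right ?_ (by positivity : 0 < t ^ (#D / k + 1))
  calc (#{ω : ι → Fin (k + 1) | #D / k < #{e ∈ D | ω e = i}} : ℝ) * t ^ (#D / k + 1)
      ≤ ∑ ω : ι → Fin (k + 1), t ^ #{e ∈ D | ω e = i} :=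
        card_filter_lt_mul_pow_le_sum ht (fun ω : ι → Fin (k + 1) => #{e ∈ D | ω e = i}) _
    _ = (1 + 1 / (k * (k + 1))) ^ #D * exp (#D * chernoffExponent k)
          * exp (-(#D * chernoffExponent k)) * (k + 1) ^ Fintype.card ι := by
        rw [hmoment, exp_neg]; field_simp
    _ ≤ exp (-(#D * chernoffExponent k)) * (k + 1) ^ Fintype.card ι * t ^ (#D / k + 1) := by
        rw [mul_comm _ (t ^ _), ← mul_assoc]
        gcongr
        exact one_add_inv_pow_mul_exp_mul_chernoffExponent_le hk #D

theorem exp_neg_two_mul_le_one_sub {t : ℝ} (h0 : 0 ≤ t) (h : t ≤ 1 / 2) :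
    exp (-2 * t) ≤ 1 - t := by
  have hprod : exp (-2 * t) * exp (2 * t) = 1 := by rw [← exp_add]; simp
  nlinarith [add_one_le_exp (2 * t), exp_pos (-2 * t)]

theorem exp_neg_two_mul_sum_le_prod_one_sub {α : Type*} {s : Finset α} {y : α → ℝ}
    (h0 : ∀ a ∈ s, 0 ≤ y a) (h : ∀ a ∈ s, y a ≤ 1 / 2) :
    exp (-2 * ∑ a ∈ s, y a) ≤ ∏ a ∈ s, (1 - y a) := by
  rw [mul_sum, exp_sum]
  exact prod_le_prod (fun _ _ => (exp_pos _).le) fun a ha =>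
    exp_neg_two_mul_le_one_sub (h0 a ha) (h a ha)

theorem exp_neg_mul_le_exp_mul_prod_one_sub {α : Type*} {s : Finset α} {y : α → ℝ}
    {μ c θ d : ℝ} (h0 : ∀ a ∈ s, 0 ≤ y a) (hμ : ∀ a ∈ s, y a ≤ μ) (hμ2 : μ ≤ 1 / 2)
    (hs : 2 * #s * μ ≤ c * d) :
    exp (-(d * θ)) ≤ exp ((c - θ) * d) * ∏ a ∈ s, (1 - y a) := by
  have hsum : ∑ a ∈ s, y a ≤ #s * μ := by simpa using sum_le_card_nsmul s y μ hμ
  calc exp (-(d * θ)) = exp ((c - θ) * d) * exp (-2 * (c * d / 2)) := by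
        rw [← exp_add]; ring_nf
    _ ≤ exp ((c - θ) * d) * exp (-2 * ∑ a ∈ s, y a) := by gcongr _ * exp ?_; linarith
    _ ≤ exp ((c - θ) * d) * ∏ a ∈ s, (1 - y a) := by
        gcongr
        exact exp_neg_two_mul_sum_le_prod_one_sub h0 fun a ha => (hμ a ha).trans hμ2

theorem exp_two_lt_twelve : exp 2 < 12 := by
  have := exp_one_lt_d9
  rw [show (2 : ℝ) = 1 + 1 by norm_num, exp_add]
  nlinarith [exp_pos 1]

theorem exists_lll_exponent {k r δ : ℕ} (hk : 2 ≤ k) (hr : 2 ≤ r)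
    (h1 : 4 * ((k : ℝ) + 1) * exp (-(δ * chernoffExponent k)) ≤ 1)
    (h2 : 8 * ((k : ℝ) + 1) * ((r : ℝ) - 1) * exp (-(δ * chernoffExponent k)) * δ ≤ 1) :
    ∃ c ≤ chernoffExponent k, exp ((c - chernoffExponent k) * δ) ≤ 1 / 2 ∧
      ∀ d : ℝ, δ ≤ d →
        2 * ((k + 1) * ((r - 1) * d + 1)) * exp ((c - chernoffExponent k) * δ) ≤ c * d := by
  set θ := chernoffExponent k
  set q := exp (-(δ * θ))
  have hk2 : (2 : ℝ) ≤ k := by exact_mod_cast hk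
  have hr2 : (2 : ℝ) ≤ r := by exact_mod_cast hr
  have hq0 : 0 < q := exp_pos _
  have hq : q ≤ 1 / 12 := by nlinarith
  have hθ : θ ≤ 1 / 36 := by
    simp only [θ, chernoffExponent]
    rw [div_le_div_iff₀ (by positivity) (by norm_num)]; nlinarith
  have hδθ : 2 ≤ δ * θ := by
    by_contra! h
    have h12 : (12 : ℝ)⁻¹ < exp (-2) := by
      rw [exp_neg]; exact inv_strictAnti₀ (exp_pos 2) exp_two_lt_twelve
    have : exp (-2) < q := exp_lt_exp.mpr (by linarith)
    linarith
  have hδ : 72 ≤ (δ : ℝ) := by nlinarith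
  set c := 8 * ((k : ℝ) + 1) * ((r : ℝ) - 1) * q
  have hcδ : c * δ ≤ 1 := h2
  have hμ : exp ((c - θ) * δ) ≤ exp 1 * q := by
    rw [show (c - θ) * δ = c * δ + -(δ * θ) by ring, exp_add]
    gcongr
  have he := exp_one_lt_d9
  refine ⟨c, by nlinarith, hμ.trans (by nlinarith), fun d hd => ?_⟩
  have hX : 2 * exp 1 * ((r - 1) * d + 1) ≤ 8 * ((r - 1) * d) := by
    have h72 : 72 ≤ ((r : ℝ) - 1) * d := by nlinarith
    nlinarith
  calc 2 * ((k + 1) * ((r - 1) * d + 1)) * exp ((c - θ) * δ)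
      ≤ 2 * ((k + 1) * ((r - 1) * d + 1)) * (exp 1 * q) := by
        gcongr; nlinarith
    _ = (k + 1) * q * (2 * exp 1 * ((r - 1) * d + 1)) := by ring
    _ ≤ (k + 1) * q * (8 * ((r - 1) * d)) := by gcongr
    _ = c * d := by ring

section Hypergraph

variable {V : Type*} [Fintype V] [DecidableEq V] {E : Finset (Finset V)}

omit [Fintype V] in
theorem card_biUnion_filter_mem_le {r : ℕ} (hE : ∀ e ∈ E, #e ≤ r) (v : V) :
    #({e ∈ E | v ∈ e}.biUnion id) ≤ (r - 1) * #{e ∈ E | v ∈ e} + 1 := by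
  have hsub : {e ∈ E | v ∈ e}.biUnion id ⊆ insert v ({e ∈ E | v ∈ e}.biUnion (·.erase v)) := by
    intro u hu
    obtain ⟨e, he, hue⟩ := mem_biUnion.mp hu
    by_cases huv : u = v
    · exact huv ▸ mem_insert_self u _
    · exact mem_insert_of_mem (mem_biUnion.mpr ⟨e, he, mem_erase.mpr ⟨huv, hue⟩⟩)
  have hsum : #({e ∈ E | v ∈ e}.biUnion (·.erase v)) ≤ (r - 1) * #{e ∈ E | v ∈ e} := by
    refine card_biUnion_le.trans ?_
    rw [mul_comm, ← smul_eq_mul]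
    refine sum_le_card_nsmul _ _ _ fun e he => ?_
    rw [mem_filter] at he
    rw [card_erase_of_mem he.2]
    exact Nat.sub_le_sub_right (hE e he.1) 1
  exact (card_le_card hsub).trans ((card_insert_le _ _).trans (by omega))

theorem card_dependencyNbhd_incident_le {κ : Type*} [Fintype κ] [DecidableEq κ] {r : ℕ}
    (hE : ∀ e ∈ E, #e ≤ r) (v : V) (i : κ) :
    #(dependencyNbhd (fun j : V × κ => {e ∈ E | j.1 ∈ e}) (v, i))
      ≤ ((r - 1) * #{e ∈ E | v ∈ e} + 1) * Fintype.card κ := by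
  refine (card_le_card (t := {e ∈ E | v ∈ e}.biUnion id ×ˢ univ) fun l hl => ?_).trans ?_
  · simp only [dependencyNbhd, mem_filter, mem_univ, true_and] at hl
    obtain ⟨e, hle, hve⟩ := not_disjoint_iff.mp hl.2
    exact mem_product.mpr ⟨mem_biUnion.mpr ⟨e, hve, (mem_filter.mp hle).2⟩, mem_univ _⟩
  · rw [card_product, card_univ]
    gcongr
    exact card_biUnion_filter_mem_le hE v

omit [Fintype V] in
theorem exp_mul_card_incident_le {δ : ℕ} (hmin : ∀ v, δ ≤ #{e ∈ E | v ∈ e}) {a : ℝ}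
    (ha : a ≤ 0) (v : V) : exp (a * #{e ∈ E | v ∈ e}) ≤ exp (a * δ) :=
  exp_le_exp.mpr (mul_le_mul_of_nonpos_left (by exact_mod_cast hmin v) ha)

/-- Colourings are defined on all of `Finset V`, not only on `E`, so that the sample space is a
product space; only their values on `E` matter. -/
def overloaded (E : Finset (Finset V)) (k : ℕ) (v : V) (i : Fin (k + 1)) :
    Finset (Finset V → Fin (k + 1)) :=
  {c | #{e ∈ E | v ∈ e} / k < #{e ∈ {e ∈ E | v ∈ e} | c e = i}}

theorem dependsOn_mem_overloaded (k : ℕ) (v : V) (i : Fin (k + 1)) :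
    DependsOn (· ∈ overloaded E k v i)
      (({e ∈ E | v ∈ e} : Finset (Finset V)) : Set (Finset V)) := by
  intro c c' h
  have hcc' : {e ∈ {e ∈ E | v ∈ e} | c e = i} = {e ∈ {e ∈ E | v ∈ e} | c' e = i} :=
    filter_congr fun e he => by rw [h e he]
  simp only [overloaded, mem_filter, mem_univ, true_and, hcc']

theorem card_overloaded_le_lll_bound {k r δ : ℕ} (hk : 2 ≤ k) (hr : 1 ≤ r)
    (hE : ∀ e ∈ E, #e ≤ r) (hmin : ∀ v, δ ≤ #{e ∈ E | v ∈ e}) {c : ℝ}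
    (hc : c ≤ chernoffExponent k) (hμ : exp ((c - chernoffExponent k) * δ) ≤ 1 / 2)
    (hcount : ∀ d : ℝ, δ ≤ d →
      2 * ((k + 1) * ((r - 1) * d + 1)) * exp ((c - chernoffExponent k) * δ) ≤ c * d)
    (v : V) (i : Fin (k + 1)) :
    let x : V × Fin (k + 1) → ℝ := fun j => exp ((c - chernoffExponent k) * #{e ∈ E | j.1 ∈ e})
    (#(overloaded E k v i) : ℝ) ≤ x (v, i) *
      (∏ l ∈ dependencyNbhd (fun j : V × Fin (k + 1) => {e ∈ E | j.1 ∈ e}) (v, i), (1 - x l)) *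
        Fintype.card (Finset V → Fin (k + 1)) := by
  intro x
  set Γ := dependencyNbhd (fun j : V × Fin (k + 1) => {e ∈ E | j.1 ∈ e}) (v, i)
  set d : ℝ := (#{e ∈ E | v ∈ e} : ℝ)
  have hΓ : (#Γ : ℝ) ≤ (k + 1) * ((r - 1) * d + 1) := by
    have := card_dependencyNbhd_incident_le hE v i
    rw [Fintype.card_fin, mul_comm] at this
    simp only [Γ, d]
    exact_mod_cast this
  have hweights : 2 * #Γ * exp ((c - chernoffExponent k) * δ) ≤ c * d :=
    calc 2 * #Γ * exp ((c - chernoffExponent k) * δ)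
        ≤ 2 * ((k + 1) * ((r - 1) * d + 1)) * exp ((c - chernoffExponent k) * δ) := by gcongr
      _ ≤ c * d := hcount d (by simp only [d]; exact_mod_cast hmin v)
  calc (#(overloaded E k v i) : ℝ)
      ≤ exp (-(d * chernoffExponent k)) * (k + 1) ^ Fintype.card (Finset V) :=
        card_filter_div_lt_card_filter_le hk _ i
    _ ≤ x (v, i) * (∏ l ∈ Γ, (1 - x l)) * (k + 1) ^ Fintype.card (Finset V) := by
        gcongr
        exact exp_neg_mul_le_exp_mul_prod_one_sub (fun _ _ => (exp_pos _).le)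
          (fun l _ => exp_mul_card_incident_le hmin (by linarith) l.1) hμ hweights
    _ = x (v, i) * (∏ l ∈ Γ, (1 - x l)) * Fintype.card (Finset V → Fin (k + 1)) := by
        rw [Fintype.card_fun, Fintype.card_fin]; push_cast; rfl

end Hypergraph

theorem majority_colouring_threshold_general (V : Type) [Fintype V] [DecidableEq V]
    (E : Finset (Finset V)) (r k δ : ℕ) (hk : 2 ≤ k) (hr : 2 ≤ r)
    (h1 : 4 * ((k : ℝ) + 1) * Real.exp (-(δ : ℝ) / (3 * (k : ℝ) ^ 2 * ((k : ℝ) + 1))) ≤ 1)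
    (h2 : 8 * ((k : ℝ) + 1) * ((r : ℝ) - 1) *
        Real.exp (-(δ : ℝ) / (3 * (k : ℝ) ^ 2 * ((k : ℝ) + 1))) * (δ : ℝ) ≤ 1)
    (hE : ∀ e ∈ E, e.Nonempty ∧ e.card ≤ r)
    (hmin : ∀ v : V, δ ≤ (E.filter (fun e => v ∈ e)).card) :
    ∃ c : Finset V → Fin (k + 1),
      ∀ (v : V) (i : Fin (k + 1)),
        (E.filter (fun e => v ∈ e ∧ c e = i)).card
          ≤ (E.filter (fun e => v ∈ e)).card / k := by
  have hexponent : -(δ : ℝ) / (3 * (k : ℝ) ^ 2 * ((k : ℝ) + 1)) = -(δ * chernoffExponent k) := by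
    rw [chernoffExponent]; ring
  rw [hexponent] at h1 h2
  obtain ⟨c, hc, hμ, hcount⟩ := exists_lll_exponent hk hr h1 h2
  obtain ⟨col, hcol⟩ := exists_forall_notMem_of_lll
    (x := fun j : V × Fin (k + 1) => exp ((c - chernoffExponent k) * #{e ∈ E | j.1 ∈ e}))
    (fun j => dependsOn_mem_overloaded k j.1 j.2) (fun _ => (exp_pos _).le)
    (fun j => (exp_mul_card_incident_le hmin (by linarith) j.1).trans_lt (by linarith))
    (fun j => card_overloaded_le_lll_bound hk (by omega) (fun e he => (hE e he).2) hmin hc hμ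
      hcount j.1 j.2)
  refine ⟨col, fun v i => ?_⟩
  simpa [overloaded, filter_filter] using hcol (v, i)

/-- Probabilistic threshold theorem: if `δ` satisfies the two Lovász-Local-Lemma
inequalities, then every rank-`r` hypergraph with minimum degree at least `δ`
admits a `(1/k)`-majority `(k+1)`-edge-colouring. -/
theorem majority_colouring_threshold (V : Type) [Fintype V] [DecidableEq V]
    (E : Finset (Finset V)) (r k δ : ℕ) (hk : 2 ≤ k) (hr : 2 ≤ r) (hδpos : 0 < δ)
    (h1 : 4 * ((k : ℝ) + 1) * Real.exp (-(δ : ℝ) / (3 * (k : ℝ) ^ 2 * ((k : ℝ) + 1))) ≤ 1)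
    (h2 : 8 * ((k : ℝ) + 1) * ((r : ℝ) - 1) *
        Real.exp (-(δ : ℝ) / (3 * (k : ℝ) ^ 2 * ((k : ℝ) + 1))) * (δ : ℝ) ≤ 1)
    (hE : ∀ e ∈ E, e.Nonempty ∧ e.card ≤ r)
    (hmin : ∀ v : V, δ ≤ (E.filter (fun e => v ∈ e)).card) :
    ∃ c : Finset V → Fin (k + 1),
      ∀ (v : V) (i : Fin (k + 1)),
        (E.filter (fun e => v ∈ e ∧ c e = i)).card
          ≤ (E.filter (fun e => v ∈ e)).card / k :=
  majority_colouring_threshold_general V E r k δ hk hr h1 h2 hE hmin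
end

section
/- Every linear hypergraph of rank at most r and minimum degree at least k²−k admits a (1/k)-majority (kr+1)-edge-colouring. -/
open Finset

/-!
Colour the edges greedily. When an edge `e` is to be coloured, call a colour saturated at a
vertex `v` if `⌊d(v)/k⌋` edges through `v` already carry it. Fewer than `d(v)` edges through `v`
are coloured so far (`e` is not), while `d(v) ≥ k² − k` gives `⌊d(v)/k⌋ ≥ k − 1 ≥ d(v) mod k`, hence
`d(v) ≤ (k + 1)⌊d(v)/k⌋`: at most `k` colours are saturated at `v`. So at most `k r` colours are
saturated somewhere on `e`, and one of the `k r + 1` colours is free for `e`.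
-/

theorem Nat.le_succ_mul_div_of_mod_le_div {d k : ℕ} (h : d % k ≤ d / k) :
    d ≤ (k + 1) * (d / k) := by
  have := Nat.div_add_mod d k
  nlinarith

theorem card_filter_le_card_fiber_mul_le {α ι : Type*} [Fintype ι] [DecidableEq ι]
    (s : Finset α) (c : α → ι) (m : ℕ) :
    #{i | m ≤ #{x ∈ s | c x = i}} * m ≤ #s :=
  calc #{i | m ≤ #{x ∈ s | c x = i}} * m
      ≤ ∑ i ∈ {i | m ≤ #{x ∈ s | c x = i}}, #{x ∈ s | c x = i} := by
        rw [← smul_eq_mul]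
        exact card_nsmul_le_sum _ (fun i => #{x ∈ s | c x = i}) m fun i hi => (mem_filter.1 hi).2
    _ ≤ ∑ i, #{x ∈ s | c x = i} := sum_le_sum_of_subset (subset_univ _)
    _ = #s := (card_eq_sum_card_fiberwise fun x _ => mem_univ (c x)).symm

section GreedyColouring

variable {V ι : Type*} [DecidableEq V] [DecidableEq ι]

theorem exists_colouring_of_exists_free_colour [Nonempty ι] (E : Finset (Finset V))
    (cap : V → ℕ)
    (hfree : ∀ e ∈ E, ∀ S ⊆ E.erase e, ∀ c : Finset V → ι,
      ∃ i, ∀ v ∈ e, #{f ∈ S | v ∈ f ∧ c f = i} < cap v) :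
    ∃ c : Finset V → ι, ∀ v i, #{f ∈ E | v ∈ f ∧ c f = i} ≤ cap v := by
  suffices ∀ S ⊆ E, ∃ c : Finset V → ι, ∀ v i, #{f ∈ S | v ∈ f ∧ c f = i} ≤ cap v from
    this E Subset.rfl
  intro S
  induction S using Finset.induction_on with
  | empty => exact fun _ => ⟨fun _ => Classical.arbitrary ι, by simp⟩
  | @insert e S heS ih =>
    intro hsub
    obtain ⟨c, hc⟩ := ih ((subset_insert e S).trans hsub)
    have hSE : S ⊆ E.erase e := fun f hf =>
      mem_erase.2 ⟨ne_of_mem_of_not_mem hf heS, hsub (mem_insert_of_mem hf)⟩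
    obtain ⟨i, hi⟩ := hfree e (hsub (mem_insert_self e S)) S hSE c
    have hS : ∀ v j, {f ∈ S | v ∈ f ∧ Function.update c e i f = j}
        = {f ∈ S | v ∈ f ∧ c f = j} := fun v j =>
      filter_congr fun f hf => by rw [Function.update_of_ne (ne_of_mem_of_not_mem hf heS)]
    refine ⟨Function.update c e i, fun v j => ?_⟩
    rw [filter_insert, Function.update_self]
    split_ifs with hvj
    · rw [card_insert_of_notMem fun h => heS (mem_filter.1 h).1, hS, ← hvj.2]
      exact hi v hvj.1
    · rw [hS]
      exact hc v j

end GreedyColouring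

theorem card_saturated_colours_le {V ι : Type*} [DecidableEq V] [Fintype ι] [DecidableEq ι]
    {E S : Finset (Finset V)} {e : Finset V} {v : V} {k : ℕ} (c : Finset V → ι) (hk : 0 < k)
    (he : e ∈ E) (hS : S ⊆ E.erase e) (hv : v ∈ e)
    (hdeg : k - 1 ≤ #{f ∈ E | v ∈ f} / k) :
    #{i | #{f ∈ E | v ∈ f} / k ≤ #{f ∈ S | v ∈ f ∧ c f = i}} ≤ k := by
  set d := #{f ∈ E | v ∈ f}
  have hSv : #{f ∈ S | v ∈ f} < d := by
    refine card_lt_card ((ssubset_iff_of_subset ?_).2 ⟨e, mem_filter.2 ⟨he, hv⟩, ?_⟩)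
    · exact filter_subset_filter _ (hS.trans (erase_subset e E))
    · exact fun h => notMem_erase e E (hS (mem_filter.1 h).1)
  have hd : d ≤ (k + 1) * (d / k) := by
    refine Nat.le_succ_mul_div_of_mod_le_div (le_trans ?_ hdeg)
    have := Nat.mod_lt d hk
    omega
  have hsat := card_filter_le_card_fiber_mul_le {f ∈ S | v ∈ f} c (d / k)
  simp only [filter_filter] at hsat
  exact Nat.le_of_lt_succ (Nat.lt_of_mul_lt_mul_right (a := d / k) (by linarith))

theorem majority_colouring_linear_general (V : Type) [DecidableEq V]
    (E : Finset (Finset V)) (r k : ℕ) (hk : 2 ≤ k)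
    (hE : ∀ e ∈ E, e.Nonempty ∧ e.card ≤ r)
    (hmin : ∀ v : V, k ^ 2 - k ≤ (E.filter (fun e => v ∈ e)).card) :
    ∃ c : Finset V → Fin (k * r + 1),
      ∀ (v : V) (i : Fin (k * r + 1)),
        (E.filter (fun e => v ∈ e ∧ c e = i)).card
          ≤ (E.filter (fun e => v ∈ e)).card / k := by
  have hdeg : ∀ v, k - 1 ≤ #{e ∈ E | v ∈ e} / k := fun v => by
    rw [Nat.le_div_iff_mul_le (by omega), Nat.sub_mul, one_mul, ← sq]
    exact hmin v
  refine exists_colouring_of_exists_free_colour E _ fun e he S hS c => ?_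
  let saturated := e.biUnion fun v => {i | #{f ∈ E | v ∈ f} / k ≤ #{f ∈ S | v ∈ f ∧ c f = i}}
  have hsat : #saturated < #(univ : Finset (Fin (k * r + 1))) :=
    calc #saturated ≤ ∑ v ∈ e, k :=
          card_biUnion_le.trans (sum_le_sum fun v hv =>
            card_saturated_colours_le c (by omega) he hS hv (hdeg v))
      _ = #e * k := sum_const_nat fun _ _ => rfl
      _ ≤ r * k := Nat.mul_le_mul_right k (hE e he).2
      _ < #(univ : Finset (Fin (k * r + 1))) := by simp [Nat.mul_comm]
  obtain ⟨i, -, hi⟩ := exists_mem_notMem_of_card_lt_card hsat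
  exact ⟨i, fun v hv => not_le.1 fun h => hi (mem_biUnion.2 ⟨v, hv, mem_filter.2 ⟨mem_univ i, h⟩⟩)⟩

/-- Every linear hypergraph of rank at most `r` and minimum degree at least `k² − k`
admits a `(1/k)`-majority `(k·r+1)`-edge-colouring. -/
theorem majority_colouring_linear (V : Type) [Fintype V] [DecidableEq V]
    (E : Finset (Finset V)) (r k : ℕ) (hk : 2 ≤ k)
    (hE : ∀ e ∈ E, e.Nonempty ∧ e.card ≤ r)
    (hLin : ∀ e ∈ E, ∀ f ∈ E, e ≠ f → (e ∩ f).card ≤ 1)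
    (hmin : ∀ v : V, k ^ 2 - k ≤ (E.filter (fun e => v ∈ e)).card) :
    ∃ c : Finset V → Fin (k * r + 1),
      ∀ (v : V) (i : Fin (k * r + 1)),
        (E.filter (fun e => v ∈ e ∧ c e = i)).card
          ≤ (E.filter (fun e => v ∈ e)).card / k :=
  majority_colouring_linear_general V E r k hk hE hmin
end

section
/- Let k ≥ 2, r ≥ 1, and δ ≥ 2rk². For i = 1,…,k define α_i = (δ/k − r)/(δ − (i−1)(δ/k − 2r)). Suppose D ≤ B(δ − (i−1)(δ/k − 2r)) for some real B ≥ 1. Then (1 − α_i)D + r ≤ B(δ − i(δ/k − 2r)) and α_i D + r ≤ Bδ/k. -/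
/-- Key numerical inequalities in the inductive step of the main theorem. -/
theorem inductive_step_inequalities (k r : ℕ) (δ B D : ℝ) (i : ℕ)
    (hk : 2 ≤ k) (hr : 1 ≤ r) (hδ : 2 * (r : ℝ) * (k : ℝ) ^ 2 ≤ δ)
    (hi : 1 ≤ i) (hik : i ≤ k) (hB : 1 ≤ B)
    (hD : D ≤ B * (δ - ((i : ℝ) - 1) * (δ / (k : ℝ) - 2 * (r : ℝ)))) :
    (1 - (δ / (k : ℝ) - (r : ℝ)) / (δ - ((i : ℝ) - 1) * (δ / (k : ℝ) - 2 * (r : ℝ)))) * D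
        + (r : ℝ) ≤ B * (δ - (i : ℝ) * (δ / (k : ℝ) - 2 * (r : ℝ))) ∧
    ((δ / (k : ℝ) - (r : ℝ)) / (δ - ((i : ℝ) - 1) * (δ / (k : ℝ) - 2 * (r : ℝ)))) * D
        + (r : ℝ) ≤ B * δ / (k : ℝ) := by
  have hkR : (2:ℝ) ≤ (k:ℝ) := by exact_mod_cast hk
  have hrR : (1:ℝ) ≤ (r:ℝ) := by exact_mod_cast hr
  have hiR : (1:ℝ) ≤ (i:ℝ) := by exact_mod_cast hi
  have hikR : (i:ℝ) ≤ (k:ℝ) := by exact_mod_cast hik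
  have hk0 : (0:ℝ) < (k:ℝ) := by linarith
  set q : ℝ := δ / (k:ℝ) with hqdef
  have hq : q * (k:ℝ) = δ := div_mul_cancel₀ δ (ne_of_gt hk0)
  have hq2r : 2 * (r:ℝ) ≤ q := by
    rw [hqdef, le_div_iff₀ hk0]
    nlinarith [mul_nonneg (by positivity : (0:ℝ) ≤ 2*(r:ℝ)*(k:ℝ)) (by linarith : (0:ℝ) ≤ (k:ℝ)-1)]
  set E : ℝ := δ - ((i:ℝ) - 1) * (q - 2 * (r:ℝ)) with hEdef
  have hEpos : 0 < E := by
    rw [hEdef, ← hq]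
    nlinarith [mul_nonneg (by linarith : (0:ℝ) ≤ (k:ℝ)-(i:ℝ)) (by linarith : (0:ℝ) ≤ q - 2*(r:ℝ))]
  have hqrE : q - (r:ℝ) ≤ E := by
    rw [hEdef, ← hq]
    nlinarith [mul_nonneg (by linarith : (0:ℝ) ≤ (k:ℝ)-(i:ℝ)) (by linarith : (0:ℝ) ≤ q - 2*(r:ℝ))]
  set α : ℝ := (q - (r:ℝ)) / E with hαdef
  have hα0 : 0 ≤ α := div_nonneg (by linarith) (le_of_lt hEpos)
  have hα1 : α ≤ 1 := by rw [hαdef, div_le_one hEpos]; exact hqrE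
  have hαE : α * E = q - (r:ℝ) := div_mul_cancel₀ _ (ne_of_gt hEpos)
  have h1 : (1 - α) * D ≤ (1 - α) * (B * E) :=
    mul_le_mul_of_nonneg_left hD (by linarith)
  have h2 : α * D ≤ α * (B * E) := mul_le_mul_of_nonneg_left hD hα0
  have h3 : α * (B * E) = (q - (r:ℝ)) * B := by
    rw [show α * (B * E) = (α * E) * B by ring, hαE]
  have hBr : (r:ℝ) ≤ B * (r:ℝ) := by nlinarith
  constructor
  · have : B * (δ - (i:ℝ) * (q - 2 * (r:ℝ))) = B * E - B * (q - 2 * (r:ℝ)) := by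
      rw [hEdef]; ring
    rw [this]
    nlinarith [h1, h3]
  · have : B * δ / (k:ℝ) = B * q := by rw [hqdef]; ring
    rw [this]
    nlinarith [h2, h3]
end

section
/- Let G = (V,E) be a finite graph (hypergraph of rank 2) with minimum degree δ(G) ≥ 4k², where k ≥ 2. Then G admits a (1/k)-majority (k+1)-edge-colouring. -/
open Finset

set_option linter.unusedSectionVars false
namespace MajAux

variable {V : Type} [Fintype V] [DecidableEq V] {n : ℕ}

/-- number of edges of `A` at vertex `u` with colour `l`. -/
def cnt (A : Finset (Finset V)) (c : Finset V → Fin n) (u : V) (l : Fin n) : ℕ :=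
  (A.filter (fun e => u ∈ e ∧ c e = l)).card

lemma cnt_mono {A B : Finset (Finset V)} (h : A ⊆ B) (c : Finset V → Fin n) (u l) :
    cnt A c u l ≤ cnt B c u l :=
  card_le_card (filter_subset_filter _ h)

lemma cnt_insert {S : Finset (Finset V)} {e : Finset V} (he : e ∉ S) (c : Finset V → Fin n)
    (u l) :
    cnt (insert e S) c u l = cnt S c u l + if u ∈ e ∧ c e = l then 1 else 0 := by
  unfold cnt
  rw [filter_insert]
  split
  · rw [card_insert_of_notMem (fun h => he (mem_of_mem_filter e h))]
  · simp

lemma cnt_empty (c : Finset V → Fin n) (u l) : cnt (∅ : Finset (Finset V)) c u l = 0 := by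
  simp [cnt]

lemma cnt_singleton (e : Finset V) (c : Finset V → Fin n) (u l) :
    cnt ({e} : Finset (Finset V)) c u l = if u ∈ e ∧ c e = l then 1 else 0 := by
  rw [show ({e} : Finset (Finset V)) = insert e ∅ from rfl, cnt_insert (notMem_empty _),
    cnt_empty]
  simp

lemma cnt_split {S E : Finset (Finset V)} (h : S ⊆ E) (c : Finset V → Fin n) (u l) :
    cnt E c u l = cnt S c u l + cnt (E \ S) c u l := by
  unfold cnt
  rw [← card_union_of_disjoint (disjoint_filter_filter disjoint_sdiff), ← filter_union,
    union_sdiff_of_subset h]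

lemma cnt_sat {S E : Finset (Finset V)} (hS : S ⊆ E) {c : Finset V → Fin n} {w : V} {l : Fin n}
    (h : ∀ e ∈ E, w ∈ e → c e = l → e ∈ S) : cnt E c w l = cnt S c w l := by
  unfold cnt
  congr 1
  apply Subset.antisymm
  · intro e hme
    rw [mem_filter] at hme ⊢
    exact ⟨h e hme.1 hme.2.1 hme.2.2, hme.2⟩
  · exact filter_subset_filter _ hS

lemma cnt_flip {S E : Finset (Finset V)} (hS : S ⊆ E) {c : Finset V → Fin n} {i j : Fin n}
    (hij : i ≠ j) (h3 : ∀ e ∈ S, c e = i ∨ c e = j) (u : V) :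
    (cnt E (fun e => if e ∈ S then (if c e = i then j else i) else c e) u i + cnt S c u i
      = cnt E c u i + cnt S c u j)
    ∧ (cnt E (fun e => if e ∈ S then (if c e = i then j else i) else c e) u j + cnt S c u j
      = cnt E c u j + cnt S c u i)
    ∧ ∀ l, l ≠ i → l ≠ j →
      cnt E (fun e => if e ∈ S then (if c e = i then j else i) else c e) u l = cnt E c u l := by
  set c' : Finset V → Fin n := fun e => if e ∈ S then (if c e = i then j else i) else c e with hc'
  have hout : ∀ l, cnt (E \ S) c' u l = cnt (E \ S) c u l := by
    intro l
    unfold cnt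
    apply congrArg
    apply filter_congr
    intro e he
    rw [mem_sdiff] at he
    simp [hc', he.2]
  have hSi : cnt S c' u i = cnt S c u j := by
    unfold cnt
    apply congrArg
    apply filter_congr
    intro e he
    rcases h3 e he with h | h <;> simp [hc', he, h, hij, Ne.symm hij]
  have hSj : cnt S c' u j = cnt S c u i := by
    unfold cnt
    apply congrArg
    apply filter_congr
    intro e he
    rcases h3 e he with h | h <;> simp [hc', he, h, hij, Ne.symm hij]
  have hSl : ∀ l, l ≠ i → l ≠ j → cnt S c' u l = cnt S c u l := by
    intro l hli hlj
    unfold cnt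
    apply congrArg
    apply filter_congr
    intro e he
    rcases h3 e he with h | h <;> simp [hc', he, h, hij, Ne.symm hij, Ne.symm hli, Ne.symm hlj]
  refine ⟨?_, ?_, ?_⟩
  · rw [cnt_split hS c' u i, cnt_split hS c u i, hout, hSi]
    omega
  · rw [cnt_split hS c' u j, cnt_split hS c u j, hout, hSj]
    omega
  · intro l hli hlj
    rw [cnt_split hS c' u l, cnt_split hS c u l, hout, hSl l hli hlj]

lemma sum_pair {f : Fin n → ℕ} {i j : Fin n} (hij : i ≠ j) :
    (∑ l ∈ (univ.erase i).erase j, f l) + f j + f i = ∑ l, f l := by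
  rw [sum_erase_add _ _ (mem_erase.mpr ⟨Ne.symm hij, mem_univ j⟩),
    sum_erase_add _ _ (mem_univ i)]

lemma g_rel {E : Finset (Finset V)} {c c' : Finset V → Fin n} {i j : Fin n} (hij : i ≠ j)
    (u : V) (ho : ∀ l, l ≠ i → l ≠ j → cnt E c' u l = cnt E c u l) :
    (∑ l, cnt E c' u l ^ 2) + cnt E c u i ^ 2 + cnt E c u j ^ 2
      = (∑ l, cnt E c u l ^ 2) + cnt E c' u i ^ 2 + cnt E c' u j ^ 2 := by
  rw [← sum_pair (f := fun l => cnt E c' u l ^ 2) hij,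
    ← sum_pair (f := fun l => cnt E c u l ^ 2) hij]
  have heq : ∑ l ∈ (univ.erase i).erase j, cnt E c' u l ^ 2
      = ∑ l ∈ (univ.erase i).erase j, cnt E c u l ^ 2 := by
    apply sum_congr rfl
    intro l hl
    rw [mem_erase, mem_erase] at hl
    rw [ho l hl.2.1 hl.1]
  rw [heq]
  ring

lemma other_vertex {e : Finset V} {w : V} (h2 : e.card = 2) (hw : w ∈ e) :
    ∃ w', w' ≠ w ∧ w' ∈ e ∧ ∀ u, u ∈ e ↔ (u = w ∨ u = w') := by
  obtain ⟨a, b, hab, rfl⟩ := card_eq_two.mp h2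
  simp only [mem_insert, mem_singleton] at hw ⊢
  rcases hw with rfl | rfl
  · exact ⟨b, Ne.symm hab, Or.inr rfl, fun u => Iff.rfl⟩
  · exact ⟨a, hab, Or.inl rfl, fun u => by tauto⟩
/-- Degree-invariant of an "alternating trail" edge set `S` from `v` (first colour `i`)
to current end `w` with last colour `x`. -/
def Inv (E S : Finset (Finset V)) (c : Finset V → Fin n) (v : V) (i j : Fin n)
    (w : V) (x : Fin n) : Prop :=
  S ⊆ E ∧ (x = i ∨ x = j) ∧ (∀ e ∈ S, c e = i ∨ c e = j) ∧
  (∀ u : V, u ≠ v → u ≠ w → cnt S c u i = cnt S c u j) ∧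
  ((w ≠ v ∧ cnt S c v i = cnt S c v j + 1
      ∧ cnt S c w x = cnt S c w (if x = i then j else i) + 1) ∨
   (w = v ∧ x = i ∧ cnt S c v i = cnt S c v j + 2) ∨
   (w = v ∧ x = j ∧ cnt S c v i = cnt S c v j))

lemma inv_extend_i {E S : Finset (Finset V)} {c : Finset V → Fin n} {v : V} {i j : Fin n}
    {w : V} (hij : i ≠ j)
    (hInv : Inv E S c v i j w i) {e : Finset V} (he : e ∈ E) (heS : e ∉ S)
    (hwe : w ∈ e) (hce : c e = j) (h2 : e.card = 2) :
    ∃ w', Inv E (insert e S) c v i j w' j := by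
  obtain ⟨hSE, -, h3, hbal, hend⟩ := hInv
  obtain ⟨w', hw'w, hw'e, hmem⟩ := other_vertex h2 hwe
  rw [if_pos rfl] at hend
  -- endpoint disjunction simplification: the `x = j` case is impossible since `x = i ≠ j`
  have hend' : (w ≠ v ∧ cnt S c v i = cnt S c v j + 1 ∧ cnt S c w i = cnt S c w j + 1) ∨
      (w = v ∧ cnt S c v i = cnt S c v j + 2) := by
    rcases hend with h | h | h
    · exact Or.inl h
    · exact Or.inr ⟨h.1, h.2.2⟩
    · exact absurd h.2.1 hij
  have hic : ∀ u : V, cnt (insert e S) c u i = cnt S c u i := by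
    intro u
    rw [cnt_insert heS, hce, if_neg (fun h => hij (h.2.symm))]
    rfl
  have hjc : ∀ u : V, u ∈ e → cnt (insert e S) c u j = cnt S c u j + 1 := by
    intro u hu
    rw [cnt_insert heS, hce, if_pos ⟨hu, rfl⟩]
  have hnc : ∀ u : V, u ∉ e → cnt (insert e S) c u j = cnt S c u j := by
    intro u hu
    rw [cnt_insert heS, hce, if_neg (fun h => hu h.1)]
    rfl
  refine ⟨w', insert_subset he hSE, Or.inr rfl, ?_, ?_, ?_⟩
  · intro e' he'
    rcases mem_insert.mp he' with rfl | h
    · exact Or.inr hce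
    · exact h3 e' h
  · -- balance at interior vertices
    intro u huv huw'
    by_cases hue : u ∈ e
    · have huw : u = w := by
        rcases (hmem u).mp hue with h | h
        · exact h
        · exact absurd h huw'
      subst huw
      rcases hend' with ⟨hwv, hv1, hw1⟩ | ⟨hwv, _⟩
      · rw [hic, hjc u hue]
        omega
      · exact absurd hwv huv
    · have huw : u ≠ w := fun h => hue (h ▸ hwe)
      rw [hic, hnc u hue]
      exact hbal u huv huw
  · -- endpoint clause
    by_cases hw'v : w' = v
    · -- closed back at `v`, arriving with colour `j` : third disjunct
      right; right
      refine ⟨hw'v, rfl, ?_⟩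
      have hwv : w ≠ v := fun h => hw'w (hw'v.trans h.symm)
      rcases hend' with ⟨-, hv1, -⟩ | ⟨h, -⟩
      · rw [hic, hjc v (hw'v ▸ hw'e)]
        omega
      · exact absurd h hwv
    · left
      refine ⟨hw'v, ?_, ?_⟩
      · -- count at v
        by_cases hve : v ∈ e
        · have hvw : v = w := by
            rcases (hmem v).mp hve with h | h
            · exact h
            · exact absurd h.symm hw'v
          rcases hend' with ⟨hwv, -, -⟩ | ⟨-, hv2⟩
          · exact absurd hvw.symm hwv
          · rw [hic, hjc v hve]
            omega
        · have hwv : w ≠ v := fun h => hve (h ▸ hwe)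
          rcases hend' with ⟨-, hv1, -⟩ | ⟨h, -⟩
          · rw [hic, hnc v hve]
            exact hv1
          · exact absurd h hwv
      · -- count at new end w', last colour j
        rw [if_neg (Ne.symm hij)]
        have hbw' : cnt S c w' i = cnt S c w' j := hbal w' hw'v hw'w
        rw [hic, hjc w' hw'e]
        omega

lemma inv_extend_j {E S : Finset (Finset V)} {c : Finset V → Fin n} {v : V} {i j : Fin n}
    {w : V} (hij : i ≠ j)
    (hInv : Inv E S c v i j w j) {e : Finset V} (he : e ∈ E) (heS : e ∉ S)
    (hwe : w ∈ e) (hce : c e = i) (h2 : e.card = 2) :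
    ∃ w', Inv E (insert e S) c v i j w' i := by
  obtain ⟨hSE, -, h3, hbal, hend⟩ := hInv
  obtain ⟨w', hw'w, hw'e, hmem⟩ := other_vertex h2 hwe
  rw [if_neg (Ne.symm hij)] at hend
  have hend' : (w ≠ v ∧ cnt S c v i = cnt S c v j + 1 ∧ cnt S c w j = cnt S c w i + 1) ∨
      (w = v ∧ cnt S c v i = cnt S c v j) := by
    rcases hend with h | h | h
    · exact Or.inl h
    · exact absurd h.2.1 (Ne.symm hij)
    · exact Or.inr ⟨h.1, h.2.2⟩
  have hjc : ∀ u : V, cnt (insert e S) c u j = cnt S c u j := by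
    intro u
    rw [cnt_insert heS, hce, if_neg (fun h => hij h.2)]
    rfl
  have hic : ∀ u : V, u ∈ e → cnt (insert e S) c u i = cnt S c u i + 1 := by
    intro u hu
    rw [cnt_insert heS, hce, if_pos ⟨hu, rfl⟩]
  have hnc : ∀ u : V, u ∉ e → cnt (insert e S) c u i = cnt S c u i := by
    intro u hu
    rw [cnt_insert heS, hce, if_neg (fun h => hu h.1)]
    rfl
  refine ⟨w', insert_subset he hSE, Or.inl rfl, ?_, ?_, ?_⟩
  · intro e' he'
    rcases mem_insert.mp he' with rfl | h
    · exact Or.inl hce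
    · exact h3 e' h
  · intro u huv huw'
    by_cases hue : u ∈ e
    · have huw : u = w := by
        rcases (hmem u).mp hue with h | h
        · exact h
        · exact absurd h huw'
      subst huw
      rcases hend' with ⟨hwv, hv1, hw1⟩ | ⟨hwv, _⟩
      · rw [hjc, hic u hue]
        omega
      · exact absurd hwv huv
    · have huw : u ≠ w := fun h => hue (h ▸ hwe)
      rw [hjc, hnc u hue]
      exact hbal u huv huw
  · by_cases hw'v : w' = v
    · -- closed back at `v`, arriving with colour `i` : second disjunct
      right; left
      refine ⟨hw'v, rfl, ?_⟩
      have hwv : w ≠ v := fun h => hw'w (hw'v.trans h.symm)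
      rcases hend' with ⟨-, hv1, -⟩ | ⟨h, -⟩
      · rw [hjc, hic v (hw'v ▸ hw'e)]
        omega
      · exact absurd h hwv
    · left
      refine ⟨hw'v, ?_, ?_⟩
      · by_cases hve : v ∈ e
        · have hvw : v = w := by
            rcases (hmem v).mp hve with h | h
            · exact h
            · exact absurd h.symm hw'v
          rcases hend' with ⟨hwv, -, -⟩ | ⟨-, hv3⟩
          · exact absurd hvw.symm hwv
          · rw [hjc, hic v hve]
            omega
        · have hwv : w ≠ v := fun h => hve (h ▸ hwe)
          rcases hend' with ⟨-, hv1, -⟩ | ⟨h, -⟩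
          · rw [hjc, hnc v hve]
            exact hv1
          · exact absurd h hwv
      · -- count at new end w', last colour i
        rw [if_pos rfl]
        have hbw' : cnt S c w' i = cnt S c w' j := hbal w' hw'v hw'w
        rw [hjc, hic w' hw'e]
        omega
def Phi (E : Finset (Finset V)) (c : Finset V → Fin n) : ℕ :=
  ∑ u : V, ∑ l : Fin n, cnt E c u l ^ 2

set_option maxHeartbeats 1000000 in
lemma key {E : Finset (Finset V)} (hE2 : ∀ e ∈ E, e.card = 2) {c : Finset V → Fin n}
    (hmin : ∀ c' : Finset V → Fin n, Phi E c ≤ Phi E c') (v : V) {i j : Fin n}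
    (hij : i ≠ j) : cnt E c v i ≤ cnt E c v j + 2 := by
  classical
  by_contra hcon
  push_neg at hcon
  have hpos : 0 < cnt E c v i := by omega
  obtain ⟨e₀, he₀⟩ := card_pos.mp hpos
  rw [mem_filter] at he₀
  have he₀E := he₀.1
  have hve₀ := he₀.2.1
  have hce₀ := he₀.2.2
  obtain ⟨u₀, hu₀v, hu₀e, hmem₀⟩ := other_vertex (hE2 e₀ he₀E) hve₀
  have hbase : Inv E {e₀} c v i j u₀ i := by
    refine ⟨singleton_subset_iff.mpr he₀E, Or.inl rfl, ?_, ?_, ?_⟩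
    · intro e' he'
      rw [mem_singleton] at he'
      subst he'
      exact Or.inl hce₀
    · intro u huv huw
      rw [cnt_singleton, cnt_singleton, if_neg, if_neg]
      · rintro ⟨hu, -⟩
        rcases (hmem₀ u).mp hu with h | h
        · exact huv h
        · exact huw h
      · rintro ⟨hu, -⟩
        rcases (hmem₀ u).mp hu with h | h
        · exact huv h
        · exact huw h
    · left
      refine ⟨hu₀v, ?_, ?_⟩
      · rw [cnt_singleton, cnt_singleton, if_pos ⟨hve₀, hce₀⟩,
          if_neg (fun h => hij (hce₀ ▸ h.2))]
      · rw [if_pos rfl, cnt_singleton, cnt_singleton, if_pos ⟨hu₀e, hce₀⟩,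
          if_neg (fun h => hij (hce₀ ▸ h.2))]
  set P : Finset (Finset V) → Prop := fun S => ∃ w x, Inv E S c v i j w x with hP
  have hne : (E.powerset.filter P).Nonempty :=
    ⟨{e₀}, mem_filter.mpr ⟨mem_powerset.mpr (singleton_subset_iff.mpr he₀E),
      u₀, i, hbase⟩⟩
  obtain ⟨S, hSmem, hmax⟩ := exists_max_image _ card hne
  obtain ⟨hSpow, w, x, hInv⟩ := mem_filter.mp hSmem
  have hnoext : ∀ e ∈ E, w ∈ e → c e = (if x = i then j else i) → e ∈ S := by
    intro e he hw hc
    by_contra heS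
    have hext : ∃ w', Inv E (insert e S) c v i j w' (if x = i then j else i) := by
      rcases hInv.2.1 with hxi | hxj
      · rw [hxi] at hc ⊢
        rw [hxi] at hInv
        rw [if_pos rfl] at hc ⊢
        exact inv_extend_i hij hInv he heS hw hc (hE2 e he)
      · rw [hxj] at hc ⊢
        rw [hxj] at hInv
        rw [if_neg (Ne.symm hij)] at hc ⊢
        exact inv_extend_j hij hInv he heS hw hc (hE2 e he)
    obtain ⟨w', hInv'⟩ := hext
    have hmem' : insert e S ∈ E.powerset.filter P :=
      mem_filter.mpr ⟨mem_powerset.mpr (insert_subset he (mem_powerset.mp hSpow)),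
        w', _, hInv'⟩
    have := hmax _ hmem'
    rw [card_insert_of_notMem heS] at this
    omega
  obtain ⟨hSE, hx, h3, hbal, hend⟩ := hInv
  have hsat : cnt E c w (if x = i then j else i) = cnt S c w (if x = i then j else i) :=
    cnt_sat hSE hnoext
  rcases hend with ⟨hwv, hv1, hw1⟩ | ⟨hwv, hxi, hv2⟩ | ⟨hwv, hxj, hv3⟩
  · -- open trail : w ≠ v
    obtain ⟨c', hc'⟩ : ∃ c' : Finset V → Fin n,
        c' = fun e => if e ∈ S then (if c e = i then j else i) else c e := ⟨_, rfl⟩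
    have hf : ∀ u : V,
        (cnt E c' u i + cnt S c u i = cnt E c u i + cnt S c u j)
        ∧ (cnt E c' u j + cnt S c u j = cnt E c u j + cnt S c u i)
        ∧ ∀ l, l ≠ i → l ≠ j → cnt E c' u l = cnt E c u l := by
      rw [hc']
      exact fun u => cnt_flip hSE hij h3 u
    have hv_lt : (∑ l, cnt E c' v l ^ 2) < ∑ l, cnt E c v l ^ 2 := by
      have hgrel := g_rel hij v (hf v).2.2
      have h1 := (hf v).1
      have h2 := (hf v).2.1
      have e1 : cnt E c' v i + 1 = cnt E c v i := by omega
      have e2 : cnt E c' v j = cnt E c v j + 1 := by omega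
      have hsq : cnt E c' v i ^ 2 + cnt E c' v j ^ 2
          < cnt E c v i ^ 2 + cnt E c v j ^ 2 := by nlinarith [e1, e2, hcon]
      linarith [hgrel, hsq]
    have hw_le : (∑ l, cnt E c' w l ^ 2) ≤ ∑ l, cnt E c w l ^ 2 := by
      have hgrel := g_rel hij w (hf w).2.2
      have h1 := (hf w).1
      have h2 := (hf w).2.1
      have hmj := cnt_mono hSE c w j
      have hmi := cnt_mono hSE c w i
      rcases hx with hxi | hxj
      · rw [hxi, if_pos rfl] at hsat hw1
        have e1 : cnt E c' w i + 1 = cnt E c w i := by omega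
        have e2 : cnt E c' w j = cnt E c w j + 1 := by omega
        have hkey : cnt E c w j + 1 ≤ cnt E c w i := by omega
        have hsq : cnt E c' w i ^ 2 + cnt E c' w j ^ 2
            ≤ cnt E c w i ^ 2 + cnt E c w j ^ 2 := by nlinarith [e1, e2, hkey]
        linarith [hgrel, hsq]
      · rw [hxj, if_neg (Ne.symm hij)] at hsat hw1
        have e1 : cnt E c' w i = cnt E c w i + 1 := by omega
        have e2 : cnt E c' w j + 1 = cnt E c w j := by omega
        have hkey : cnt E c w i + 1 ≤ cnt E c w j := by omega
        have hsq : cnt E c' w i ^ 2 + cnt E c' w j ^ 2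
            ≤ cnt E c w i ^ 2 + cnt E c w j ^ 2 := by nlinarith [e1, e2, hkey]
        linarith [hgrel, hsq]
    have hu_eq : ∀ u : V, u ≠ v → u ≠ w →
        (∑ l, cnt E c' u l ^ 2) = ∑ l, cnt E c u l ^ 2 := by
      intro u huv huw
      have hgrel := g_rel hij u (hf u).2.2
      have hb := hbal u huv huw
      have h1 := (hf u).1
      have h2 := (hf u).2.1
      have e1 : cnt E c' u i = cnt E c u i := by omega
      have e2 : cnt E c' u j = cnt E c u j := by omega
      rw [e1, e2] at hgrel
      omega
    have hlt : Phi E c' < Phi E c := by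
      apply sum_lt_sum
      · intro u _
        by_cases huv : u = v
        · exact huv ▸ le_of_lt hv_lt
        · by_cases huw : u = w
          · exact huw ▸ hw_le
          · exact le_of_eq (hu_eq u huv huw)
      · exact ⟨v, mem_univ v, hv_lt⟩
    exact absurd (hmin c') (not_le.mpr hlt)
  · -- closed trail, last colour i
    rw [hxi, if_pos rfl] at hsat
    rw [hwv] at hsat
    obtain ⟨c', hc'⟩ : ∃ c' : Finset V → Fin n,
        c' = fun e => if e ∈ S then (if c e = i then j else i) else c e := ⟨_, rfl⟩
    have hf : ∀ u : V,
        (cnt E c' u i + cnt S c u i = cnt E c u i + cnt S c u j)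
        ∧ (cnt E c' u j + cnt S c u j = cnt E c u j + cnt S c u i)
        ∧ ∀ l, l ≠ i → l ≠ j → cnt E c' u l = cnt E c u l := by
      rw [hc']
      exact fun u => cnt_flip hSE hij h3 u
    have hv_lt : (∑ l, cnt E c' v l ^ 2) < ∑ l, cnt E c v l ^ 2 := by
      have hgrel := g_rel hij v (hf v).2.2
      have h1 := (hf v).1
      have h2 := (hf v).2.1
      have e1 : cnt E c' v i + 2 = cnt E c v i := by omega
      have e2 : cnt E c' v j = cnt E c v j + 2 := by omega
      have hsq : cnt E c' v i ^ 2 + cnt E c' v j ^ 2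
          < cnt E c v i ^ 2 + cnt E c v j ^ 2 := by nlinarith [e1, e2, hcon]
      linarith [hgrel, hsq]
    have hu_eq : ∀ u : V, u ≠ v →
        (∑ l, cnt E c' u l ^ 2) = ∑ l, cnt E c u l ^ 2 := by
      intro u huv
      have hgrel := g_rel hij u (hf u).2.2
      have hb : cnt S c u i = cnt S c u j := hbal u huv (by rw [hwv]; exact huv)
      have h1 := (hf u).1
      have h2 := (hf u).2.1
      have e1 : cnt E c' u i = cnt E c u i := by omega
      have e2 : cnt E c' u j = cnt E c u j := by omega
      rw [e1, e2] at hgrel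
      omega
    have hlt : Phi E c' < Phi E c := by
      apply sum_lt_sum
      · intro u _
        by_cases huv : u = v
        · exact huv ▸ le_of_lt hv_lt
        · exact le_of_eq (hu_eq u huv)
      · exact ⟨v, mem_univ v, hv_lt⟩
    exact absurd (hmin c') (not_le.mpr hlt)
  · -- closed trail, last colour j : direct contradiction
    rw [hxj, if_neg (Ne.symm hij)] at hsat
    rw [hwv] at hsat
    have hm := cnt_mono hSE c v j
    omega
end MajAux

open MajAux in
/-- Specialization of the main theorem to graphs (rank-2 hypergraphs): minimum degree
at least `4k²` guarantees a `(1/k)`-majority `(k+1)`-edge-colouring. -/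
theorem majority_colouring_graph (V : Type) [Fintype V] [DecidableEq V]
    (E : Finset (Finset V)) (k : ℕ) (hk : 2 ≤ k)
    (hE : ∀ e ∈ E, e.card = 2)
    (hδ : ∀ v : V, 4 * k ^ 2 ≤ (E.filter (fun e => v ∈ e)).card) :
    ∃ c : Finset V → Fin (k + 1),
      ∀ (v : V) (i : Fin (k + 1)),
        (E.filter (fun e => v ∈ e ∧ c e = i)).card
          ≤ (E.filter (fun e => v ∈ e)).card / k := by
  classical
  obtain ⟨c, -, hmin⟩ := exists_min_image (univ : Finset (Finset V → Fin (k + 1)))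
    (Phi E) univ_nonempty
  refine ⟨c, fun v i => ?_⟩
  have hkey : ∀ j : Fin (k + 1), cnt E c v i ≤ cnt E c v j + 2 := by
    intro j
    by_cases hij : i = j
    · subst hij; omega
    · exact key hE (fun c' => hmin c' (mem_univ c')) v hij
  have hsum : (E.filter (fun e => v ∈ e)).card = ∑ l : Fin (k + 1), cnt E c v l := by
    rw [card_eq_sum_card_fiberwise (f := c) (t := univ) (fun e _ => mem_univ _)]
    refine sum_congr rfl fun l _ => ?_
    rw [filter_filter]
    rfl
  have h1 : (k + 1) * cnt E c v i ≤ (E.filter (fun e => v ∈ e)).card + 2 * (k + 1) := by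
    have : ∑ _l : Fin (k + 1), cnt E c v i ≤ ∑ l : Fin (k + 1), (cnt E c v l + 2) :=
      sum_le_sum fun l _ => hkey l
    rw [sum_const, card_univ, Fintype.card_fin, smul_eq_mul] at this
    rw [sum_add_distrib, sum_const, card_univ, Fintype.card_fin, smul_eq_mul] at this
    omega
  have hd := hδ v
  rw [Nat.le_div_iff_mul_le (by omega : 0 < k)]
  show cnt E c v i * k ≤ (E.filter (fun e => v ∈ e)).card
  rcases le_or_gt (cnt E c v i) (2 * k + 1) with h | h
  · have h2 : cnt E c v i * k ≤ (2 * k + 1) * k := Nat.mul_le_mul_right k h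
    nlinarith [hd, hk, h2]
  · nlinarith [h1, h, hd]
end
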